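/- arXiv:1611.08826 — 7 statements merged into one kernel-verified Lean document; each statement's English description precedes it below -/
import Mathlib

section
/- Let f be a satisfaction function with f(0)=0 and f(1)=1 (so w_1=1) and nonnegative weights w_k ≥ 0. Thiele's optimization method with satisfaction function f is house monotone if and only if f(n) = n for every n (equivalently, w_n = 1 for every n ≥ 1). -/
open Finset

/-- Total satisfaction `F(S) = Σ_σ v_σ · f(|σ ∩ S|)` of the outcome `S`
under the profile `v` and satisfaction function `f`. -/
noncomputable def thieleF {C : Type} [Fintype C] [DecidableEq C]
    (f : ℕ → ℝ) (v : Finset C → ℕ) (S : Finset C) : ℝ :=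
  ∑ σ : Finset C, (v σ : ℝ) * f ((σ ∩ S).card)

/-- `S` is a possible outcome of Thiele's optimization method with satisfaction
function `f` for `M` seats: `S` has `M` elements and maximizes the total satisfaction
among all `M`-element sets. -/
def ThieleOptOutcome {C : Type} [Fintype C] [DecidableEq C]
    (f : ℕ → ℝ) (v : Finset C → ℕ) (M : ℕ) (S : Finset C) : Prop :=
  S.card = M ∧ ∀ T : Finset C, T.card = M → thieleF f v T ≤ thieleF f v S

section Aux

variable {C : Type} [Fintype C] [DecidableEq C]
set_option linter.unusedSectionVars false

noncomputable def score (v : Finset C → ℕ) (c : C) : ℝ :=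
  ∑ σ : Finset C, (v σ : ℝ) * (if c ∈ σ then 1 else 0)

lemma inter_card_eq_sum (σ S : Finset C) :
    ((σ ∩ S).card : ℝ) = ∑ c ∈ S, (if c ∈ σ then (1:ℝ) else 0) := by
  rw [inter_comm, ← filter_mem_eq_inter, card_filter]
  push_cast
  rfl

lemma thieleF_id (v : Finset C → ℕ) (S : Finset C) :
    thieleF (fun n => (n : ℝ)) v S = ∑ c ∈ S, score v c := by
  unfold thieleF score
  simp only [inter_card_eq_sum, mul_sum]
  exact Finset.sum_comm

lemma houseMono_of_id (f : ℕ → ℝ) (hf : ∀ n, f n = n)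
    (v : Finset C → ℕ) (M : ℕ) (hM : M + 1 ≤ Fintype.card C)
    (S : Finset C) (hS : ThieleOptOutcome f v M S) :
    ∃ S', ThieleOptOutcome f v (M+1) S' ∧ S ⊆ S' := by
  have hfe : f = fun n : ℕ => (n : ℝ) := funext hf
  subst hfe
  obtain ⟨hcard, hopt⟩ := hS
  have hne : Sᶜ.Nonempty := by
    rw [← Finset.card_pos, Finset.card_compl, hcard]
    omega
  obtain ⟨c, hc, hmax⟩ := Sᶜ.exists_max_image (score v) hne
  have hcS : c ∉ S := Finset.mem_compl.mp hc
  refine ⟨insert c S, ⟨?_, ?_⟩, Finset.subset_insert _ _⟩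
  · rw [Finset.card_insert_of_notMem hcS, hcard]
  · intro T hT
    have hTS : ∃ t ∈ T, t ∉ S := by
      by_contra h
      push_neg at h
      have := Finset.card_le_card h
      omega
    obtain ⟨t, htT, htS⟩ := hTS
    rw [thieleF_id, thieleF_id, Finset.sum_insert hcS,
      ← Finset.sum_erase_add T _ htT]
    have h1 : ∑ c ∈ T.erase t, score v c ≤ ∑ c ∈ S, score v c := by
      rw [← thieleF_id, ← thieleF_id]
      apply hopt
      rw [Finset.card_erase_of_mem htT, hT]
      omega
    have h2 : score v t ≤ score v c := hmax t (Finset.mem_compl.mpr htS)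
    linarith

lemma thieleF_indicator (f : ℕ → ℝ) (W : Finset (Finset C)) (S : Finset C) :
    thieleF f (fun σ => if σ ∈ W then 1 else 0) S = ∑ σ ∈ W, f ((σ ∩ S).card) := by
  unfold thieleF
  simp only [Nat.cast_ite, Nat.cast_one, Nat.cast_zero, ite_mul, one_mul, zero_mul]
  rw [Finset.sum_ite_mem, univ_inter]

lemma total_indicator (W : Finset (Finset C)) :
    ∑ σ : Finset C, (if σ ∈ W then 1 else 0) = W.card := by
  rw [Finset.sum_ite_mem, univ_inter, Finset.card_eq_sum_ones]

lemma card_inter_partition {P Q : Finset C} (T : Finset C)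
    (hd : Disjoint P Q) (hu : P ∪ Q = univ) :
    (P ∩ T).card + (Q ∩ T).card = T.card := by
  have hd2 : Disjoint (P ∩ T) (Q ∩ T) := by
    rw [Finset.disjoint_left] at hd ⊢
    intro a ha hb
    exact hd (mem_inter.mp ha).1 (mem_inter.mp hb).1
  rw [← Finset.card_union_of_disjoint hd2, ← Finset.union_inter_distrib_right, hu, univ_inter]

end Aux
section ConsX
variable (f : ℕ → ℝ)

lemma fk_le_k (hf0 : f 0 = 0) (hf1 : f 1 = 1)
    (HM : ∀ (C : Type) [Fintype C] [DecidableEq C] (v : Finset C → ℕ),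
        v ∅ = 0 → 0 < ∑ σ : Finset C, v σ →
        ∀ M : ℕ, 1 ≤ M → M + 1 ≤ Fintype.card C →
        ∀ S : Finset C, ThieleOptOutcome f v M S →
          ∃ S' : Finset C, ThieleOptOutcome f v (M + 1) S' ∧ S ⊆ S')
    (k : ℕ) (hk : 2 ≤ k) (IH : ∀ j < k, f j = j) : f k ≤ k := by
  haveI : NeZero k := ⟨by omega⟩
  set C := Fin k ⊕ Fin k with hC
  let A : Finset C := univ.map ⟨Sum.inl, Sum.inl_injective⟩
  let B : Finset C := univ.map ⟨Sum.inr, Sum.inr_injective⟩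
  have hAmem : ∀ x : C, x ∈ A ↔ x.isLeft := by
    rintro (i | i) <;> simp [A]
  have hBmem : ∀ x : C, x ∈ B ↔ x.isRight := by
    rintro (i | i) <;> simp [B]
  have hcardA : A.card = k := by simp [A]
  have hcardB : B.card = k := by simp [B]
  have hdisj : Disjoint A B := by
    rw [Finset.disjoint_left]
    intro x hx hx'
    rw [hAmem] at hx; rw [hBmem] at hx'
    cases x <;> simp_all
  have huniv : A ∪ B = univ := by
    ext x
    rcases x with i | i <;> simp [hAmem, hBmem]
  set W : Finset (Finset C) := insert A (B.image fun b => ({b} : Finset C)) with hW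
  have hAnotim : A ∉ B.image fun b => ({b} : Finset C) := by
    intro h
    obtain ⟨b, _, hb⟩ := Finset.mem_image.mp h
    have := congrArg Finset.card hb
    simp [hcardA] at this
    omega
  set v : Finset C → ℕ := fun σ => if σ ∈ W then 1 else 0 with hv
  -- the value of thieleF
  have hval : ∀ T : Finset C, thieleF f v T = f ((A ∩ T).card) + ((B ∩ T).card : ℝ) := by
    intro T
    rw [hv, thieleF_indicator, hW, Finset.sum_insert hAnotim,
      Finset.sum_image (by intro b _ b' _ h; exact Finset.singleton_inj.mp h)]
    congr 1
    have : ∀ b ∈ B, f (({b} ∩ T).card) = if b ∈ T then (1:ℝ) else 0 := by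
      intro b _
      by_cases hb : b ∈ T
      · rw [Finset.singleton_inter_of_mem hb, if_pos hb]
        simpa using hf1
      · rw [Finset.singleton_inter_of_notMem hb, if_neg hb]
        simpa using hf0
    rw [Finset.sum_congr rfl this, Finset.sum_boole, filter_mem_eq_inter, inter_comm]
  -- the starting outcome S = B minus one element
  have hkpos : 0 < k := by omega
  set b0 : C := Sum.inr ⟨0, hkpos⟩ with hb0
  have hb0B : b0 ∈ B := by rw [hBmem]; rfl
  set S : Finset C := B.erase b0 with hS
  have hcardS : S.card = k - 1 := by rw [hS, Finset.card_erase_of_mem hb0B, hcardB]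
  have hSB : S ⊆ B := Finset.erase_subset _ _
  have hFS : thieleF f v S = ((k - 1 : ℕ) : ℝ) := by
    rw [hval]
    have h1 : A ∩ S = ∅ := by
      rw [← Finset.disjoint_iff_inter_eq_empty]
      exact hdisj.mono_right hSB
    have h2 : B ∩ S = S := by rw [inter_comm]; exact Finset.inter_eq_left.mpr hSB
    rw [h1, h2, hcardS]
    simpa using hf0
  have hopt : ThieleOptOutcome f v (k - 1) S := by
    refine ⟨hcardS, fun T hT => ?_⟩
    rw [hval, hFS]
    have hAT : (A ∩ T).card ≤ k - 1 := le_trans (Finset.card_le_card inter_subset_right) (le_of_eq hT)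
    rw [IH _ (by omega)]
    have := card_inter_partition T hdisj huniv
    rw [hT] at this
    exact_mod_cast this.le
  have hv0 : v ∅ = 0 := by
    rw [hv]
    apply if_neg
    rw [hW]
    simp only [Finset.mem_insert, Finset.mem_image, not_or, not_exists]
    constructor
    · intro h
      have := congrArg Finset.card h
      rw [hcardA] at this
      simp at this
      omega
    · intro b
      simp only [not_and]
      intro _
      exact fun h => Finset.singleton_ne_empty b h
  have htot : 0 < ∑ σ : Finset C, v σ := by
    rw [hv, total_indicator]
    exact Finset.card_pos.mpr ⟨A, Finset.mem_insert_self _ _⟩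
  have hcardC : Fintype.card C = 2 * k := by
    show Fintype.card (Fin k ⊕ Fin k) = 2 * k
    simp [Fintype.card_sum]
    omega
  obtain ⟨S', hS', hsub⟩ := HM C v hv0 htot (k - 1) (by omega) (by omega) S hopt
  have hk1 : k - 1 + 1 = k := by omega
  rw [hk1] at hS'
  obtain ⟨hcS', hoptS'⟩ := hS'
  have hFA : thieleF f v A = f k := by
    rw [hval, inter_self, hcardA, inter_comm,
      Finset.disjoint_iff_inter_eq_empty.mp hdisj]
    simp
  have hge : f k ≤ thieleF f v S' := by
    rw [← hFA]
    exact hoptS' A hcardA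
  have hBS' : k - 1 ≤ (B ∩ S').card := by
    rw [← hcardS]
    exact Finset.card_le_card (Finset.subset_inter hSB hsub)
  have hpart := card_inter_partition S' hdisj huniv
  rw [hcS'] at hpart
  have hA1 : (A ∩ S').card ≤ 1 := by omega
  have hfA1 : f ((A ∩ S').card) ≤ (((A ∩ S').card : ℕ) : ℝ) := by
    rcases Nat.le_one_iff_eq_zero_or_eq_one.mp hA1 with h | h <;> rw [h] <;>
      simp [hf0, hf1]
  have hle : thieleF f v S' ≤ (k : ℝ) := by
    rw [hval]
    have hcast : (((A ∩ S').card : ℕ) : ℝ) + (((B ∩ S').card : ℕ) : ℝ) = (k : ℝ) := by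
      exact_mod_cast congrArg (Nat.cast : ℕ → ℝ) hpart
    linarith
  linarith

lemma k_le_fk (hf0 : f 0 = 0) (hf1 : f 1 = 1)
    (HM : ∀ (C : Type) [Fintype C] [DecidableEq C] (v : Finset C → ℕ),
        v ∅ = 0 → 0 < ∑ σ : Finset C, v σ →
        ∀ M : ℕ, 1 ≤ M → M + 1 ≤ Fintype.card C →
        ∀ S : Finset C, ThieleOptOutcome f v M S →
          ∃ S' : Finset C, ThieleOptOutcome f v (M + 1) S' ∧ S ⊆ S')
    (k : ℕ) (hk : 2 ≤ k) (IH : ∀ j < k, f j = j) : (k : ℝ) ≤ f k := by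
  have hk1 : 0 < k - 1 := by omega
  set C := Fin (k - 1) ⊕ Fin 2 with hC
  let A : Finset C := univ.map ⟨Sum.inl, Sum.inl_injective⟩
  let a0 : C := Sum.inl ⟨0, hk1⟩
  let c1 : C := Sum.inr 0
  let c2 : C := Sum.inr 1
  have htwo : ∀ j : Fin 2, j = 0 ∨ j = 1 := by decide
  have hAmem : ∀ i : Fin (k - 1), Sum.inl i ∈ A := fun i => by simp [A]
  have hAmem' : ∀ (x : C), x ∈ A ↔ x.isLeft := by rintro (i | i) <;> simp [A]
  have hc1A : c1 ∉ A := by simp [hAmem', c1]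
  have hc2A : c2 ∉ A := by simp [hAmem', c2]
  have hc12 : c1 ≠ c2 := fun h => absurd (Sum.inr.inj h) (by decide)
  have ha0c1 : a0 ≠ c1 := by simp [a0, c1]
  have ha0c2 : a0 ≠ c2 := by simp [a0, c2]
  have ha0A : a0 ∈ A := hAmem _
  have hcardA : A.card = k - 1 := by simp [A]
  set σ1 : Finset C := insert c1 A with hσ1
  set σ2 : Finset C := insert c2 A with hσ2
  have hc2σ1 : c2 ∉ σ1 := by
    rw [hσ1, Finset.mem_insert]
    push_neg
    exact ⟨hc12.symm, hc2A⟩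
  have hc1σ2 : c1 ∉ σ2 := by
    rw [hσ2, Finset.mem_insert]
    push_neg
    exact ⟨hc12, hc1A⟩
  have hne12 : σ1 ≠ σ2 := fun h => hc1σ2 (h ▸ Finset.mem_insert_self c1 A)
  have hne13 : σ1 ≠ {c1} := by
    intro h
    have : a0 ∈ ({c1} : Finset C) := h ▸ Finset.mem_insert_of_mem ha0A
    exact ha0c1 (Finset.mem_singleton.mp this)
  have hne14 : σ1 ≠ {c2} := by
    intro h
    have : a0 ∈ ({c2} : Finset C) := h ▸ Finset.mem_insert_of_mem ha0A
    exact ha0c2 (Finset.mem_singleton.mp this)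
  have hne23 : σ2 ≠ {c1} := by
    intro h
    have : a0 ∈ ({c1} : Finset C) := h ▸ Finset.mem_insert_of_mem ha0A
    exact ha0c1 (Finset.mem_singleton.mp this)
  have hne24 : σ2 ≠ {c2} := by
    intro h
    have : a0 ∈ ({c2} : Finset C) := h ▸ Finset.mem_insert_of_mem ha0A
    exact ha0c2 (Finset.mem_singleton.mp this)
  have hne34 : ({c1} : Finset C) ≠ {c2} := fun h =>
    hc12 (Finset.singleton_inj.mp h)
  set W : Finset (Finset C) :=
    insert σ1 (insert σ2 (insert {c1} {({c2} : Finset C)})) with hW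
  set v : Finset C → ℕ := fun σ => if σ ∈ W then 1 else 0 with hv
  have hval : ∀ T : Finset C, thieleF f v T =
      f ((σ1 ∩ T).card) + f ((σ2 ∩ T).card) +
      f ((({c1} : Finset C) ∩ T).card) + f ((({c2} : Finset C) ∩ T).card) := by
    intro T
    rw [hv, thieleF_indicator, hW,
      Finset.sum_insert (by simp [hne12, hne13, hne14]),
      Finset.sum_insert (by simp [hne23, hne24]),
      Finset.sum_insert (by simp [hne34]), Finset.sum_singleton]
    ring
  have hpart1 : ∀ T : Finset C,
      (σ1 ∩ T).card + (({c2} : Finset C) ∩ T).card = T.card := by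
    intro T
    apply card_inter_partition T
    · rw [Finset.disjoint_singleton_right]
      exact hc2σ1
    · ext x
      rcases x with i | j
      · simp [hσ1, Finset.mem_union, Finset.mem_insert, hAmem]
      · rcases htwo j with rfl | rfl <;>
          simp [hσ1, Finset.mem_union, Finset.mem_insert, c1, c2]
  have hpart2 : ∀ T : Finset C,
      (σ2 ∩ T).card + (({c1} : Finset C) ∩ T).card = T.card := by
    intro T
    apply card_inter_partition T
    · rw [Finset.disjoint_singleton_right]
      exact hc1σ2
    · ext x
      rcases x with i | j
      · simp [hσ2, Finset.mem_union, Finset.mem_insert, hAmem]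
      · rcases htwo j with rfl | rfl <;>
          simp [hσ2, Finset.mem_union, Finset.mem_insert, c1, c2]
  -- value of the starting outcome A
  have hσ1A : σ1 ∩ A = A := Finset.inter_eq_right.mpr (Finset.subset_insert _ _)
  have hσ2A : σ2 ∩ A = A := Finset.inter_eq_right.mpr (Finset.subset_insert _ _)
  have hFA : thieleF f v A = 2 * ((k - 1 : ℕ) : ℝ) := by
    rw [hval, hσ1A, hσ2A, Finset.singleton_inter_of_notMem hc1A,
      Finset.singleton_inter_of_notMem hc2A, hcardA, IH (k - 1) (by omega)]
    simp [hf0]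
    ring
  have hopt : ThieleOptOutcome f v (k - 1) A := by
    refine ⟨hcardA, fun T hT => ?_⟩
    have hle : ∀ P : Finset C, ((P ∩ T).card) ≤ k - 1 :=
      fun P => le_trans (Finset.card_le_card Finset.inter_subset_right) (le_of_eq hT)
    rw [hval, hFA, IH _ (by have := hle σ1; omega),
      IH _ (by have := hle σ2; omega), IH _ (by have := hle {c1}; omega),
      IH _ (by have := hle {c2}; omega)]
    have h1 := hpart1 T
    have h2 := hpart2 T
    rw [hT] at h1 h2
    exact_mod_cast (by omega : (σ1 ∩ T).card + (σ2 ∩ T).card +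
      (({c1} : Finset C) ∩ T).card + (({c2} : Finset C) ∩ T).card ≤ 2 * (k - 1))
  have hv0 : v ∅ = 0 := by
    rw [hv]
    apply if_neg
    rw [hW]
    simp only [Finset.mem_insert, Finset.mem_singleton, not_or]
    refine ⟨?_, ?_, ?_, ?_⟩ <;> intro h
    · exact (Finset.insert_ne_empty c1 A) h.symm
    · exact (Finset.insert_ne_empty c2 A) h.symm
    · exact (Finset.singleton_ne_empty c1) h.symm
    · exact (Finset.singleton_ne_empty c2) h.symm
  have htot : 0 < ∑ σ : Finset C, v σ := by
    rw [hv, total_indicator]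
    exact Finset.card_pos.mpr ⟨σ1, Finset.mem_insert_self _ _⟩
  have hcardC : Fintype.card C = k + 1 := by
    show Fintype.card (Fin (k - 1) ⊕ Fin 2) = k + 1
    simp [Fintype.card_sum]
    omega
  obtain ⟨S', hS', hsub⟩ := HM C v hv0 htot (k - 1) (by omega) (by omega) A hopt
  have hk11 : k - 1 + 1 = k := by omega
  rw [hk11] at hS'
  obtain ⟨hcS', hoptS'⟩ := hS'
  -- identify S' = insert x A with x = c1 or c2
  have hnsub : ¬ S' ⊆ A := by
    intro h
    have := Finset.card_le_card h
    omega
  obtain ⟨x, hxS', hxA⟩ := Finset.not_subset.mp hnsub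
  have hS'eq : S' = insert x A := by
    refine (Finset.eq_of_subset_of_card_le (Finset.insert_subset hxS' hsub) ?_).symm
    rw [Finset.card_insert_of_notMem hxA, hcardA, hcS']
    omega
  have hxc : x = c1 ∨ x = c2 := by
    rcases x with i | j
    · exact absurd (hAmem i) hxA
    · rcases htwo j with rfl | rfl
      · exact Or.inl rfl
      · exact Or.inr rfl
  -- value of S'
  have hFS' : thieleF f v S' = f k + ((k - 1 : ℕ) : ℝ) + 1 := by
    rcases hxc with rfl | rfl
    · -- S' = σ1
      have hS'σ1 : S' = σ1 := by rw [hS'eq, hσ1]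
      have hcardσ1 : σ1.card = k := by
        rw [hσ1, Finset.card_insert_of_notMem hc1A, hcardA]
        omega
      rw [hS'σ1, hval, Finset.inter_self, hcardσ1,
        Finset.insert_inter_of_notMem hc2σ1, Finset.inter_comm A σ1, hσ1A,
        Finset.singleton_inter_of_mem (Finset.mem_insert_self c1 A),
        Finset.singleton_inter_of_notMem hc2σ1, hcardA, IH (k - 1) (by omega)]
      simp [hf0, hf1]
    · -- S' = σ2
      have hS'σ2 : S' = σ2 := by rw [hS'eq, hσ2]
      have hcardσ2 : σ2.card = k := by
        rw [hσ2, Finset.card_insert_of_notMem hc2A, hcardA]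
        omega
      rw [hS'σ2, hval, Finset.inter_self, hcardσ2,
        Finset.insert_inter_of_notMem hc1σ2, Finset.inter_comm A σ2, hσ2A,
        Finset.singleton_inter_of_mem (Finset.mem_insert_self c2 A),
        Finset.singleton_inter_of_notMem hc1σ2, hcardA, IH (k - 1) (by omega)]
      simp [hf0, hf1]
      ring
  -- the competing outcome T*
  set T0 : Finset C := insert c1 (insert c2 (A.erase a0)) with hT0
  have hc2er : c2 ∉ A.erase a0 := fun h => hc2A (Finset.mem_of_mem_erase h)
  have hc1er : c1 ∉ insert c2 (A.erase a0) := by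
    rw [Finset.mem_insert]
    push_neg
    exact ⟨hc12, fun h => hc1A (Finset.mem_of_mem_erase h)⟩
  have hcarder : (A.erase a0).card = k - 2 := by
    rw [Finset.card_erase_of_mem ha0A, hcardA]
    omega
  have hcardT0 : T0.card = k := by
    rw [hT0, Finset.card_insert_of_notMem hc1er,
      Finset.card_insert_of_notMem hc2er, hcarder]
    omega
  have hc1T0 : c1 ∈ T0 := Finset.mem_insert_self _ _
  have hc2T0 : c2 ∈ T0 := Finset.mem_insert_of_mem (Finset.mem_insert_self _ _)
  have hAT0 : A ∩ T0 = A.erase a0 := by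
    rw [hT0, Finset.inter_insert_of_notMem hc1A, Finset.inter_insert_of_notMem hc2A]
    exact Finset.inter_eq_right.mpr (Finset.erase_subset _ _)
  have hσ1T0 : (σ1 ∩ T0).card = k - 1 := by
    rw [hσ1, Finset.insert_inter_of_mem hc1T0, hAT0,
      Finset.card_insert_of_notMem (fun h => hc1A (Finset.mem_of_mem_erase h)),
      hcarder]
    omega
  have hσ2T0 : (σ2 ∩ T0).card = k - 1 := by
    rw [hσ2, Finset.insert_inter_of_mem hc2T0, hAT0,
      Finset.card_insert_of_notMem hc2er, hcarder]
    omega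
  have hFT0 : thieleF f v T0 = 2 * ((k - 1 : ℕ) : ℝ) + 2 := by
    rw [hval, hσ1T0, hσ2T0, Finset.singleton_inter_of_mem hc1T0,
      Finset.singleton_inter_of_mem hc2T0, IH (k - 1) (by omega)]
    simp [hf1]
    ring
  have hfinal := hoptS' T0 hcardT0
  rw [hFT0, hFS'] at hfinal
  have hcast : ((k - 1 : ℕ) : ℝ) = (k : ℝ) - 1 := by
    push_cast [Nat.cast_sub (by omega : 1 ≤ k)]
    ring
  rw [hcast] at hfinal
  linarith
end ConsX


/-- Let `f` be a satisfaction function with `f 0 = 0`, `f 1 = 1` and nonnegative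
weights (`Monotone f`).  Thiele's optimization method with satisfaction function `f`
is house monotone if and only if `f n = n` for every `n`. -/
theorem stmt_0 (f : ℕ → ℝ) (hf0 : f 0 = 0) (hf1 : f 1 = 1) (hmono : Monotone f) :
    (∀ (C : Type) [Fintype C] [DecidableEq C] (v : Finset C → ℕ),
        v ∅ = 0 → 0 < ∑ σ : Finset C, v σ →
        ∀ M : ℕ, 1 ≤ M → M + 1 ≤ Fintype.card C →
        ∀ S : Finset C, ThieleOptOutcome f v M S →
          ∃ S' : Finset C, ThieleOptOutcome f v (M + 1) S' ∧ S ⊆ S')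
    ↔ (∀ n : ℕ, f n = (n : ℝ)) := by
  constructor
  · intro HM n
    induction n using Nat.strong_induction_on with
    | _ n IHn =>
      match n, IHn with
      | 0, _ => simpa using hf0
      | 1, _ => simpa using hf1
      | (m + 2), IHn =>
        have hk : 2 ≤ m + 2 := by omega
        have h1 := fk_le_k f hf0 hf1 HM (m + 2) hk (fun j hj => IHn j hj)
        have h2 := k_le_fk f hf0 hf1 HM (m + 2) hk (fun j hj => IHn j hj)
        linarith
  · intro hf C _ _ v _ _ M _ hM S hS
    exact houseMono_of_id f hf v M hM S hS
end

section
/- In the party list case, with the proportional satisfaction function f(n) = Σ_{k=1}^n 1/k, a set S ⊆ C with |S| = M is a possible outcome of Thiele's optimization method if and only if the seat numbers m_j = |S ∩ L_j| form a D'Hondt allocation of M seats to the vote totals v_1,…,v_p. In particular, Thiele's optimization method distributes the seats between the parties exactly as D'Hondt's method. -/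
open Finset

/-- The proportional satisfaction function `f(n) = Σ_{k=1}^n 1/k`. -/
noncomputable def harm (n : ℕ) : ℝ := ∑ k ∈ Finset.range n, (1 : ℝ) / (k + 1)

/-- The party-list profile: party `j` receives `v j` ballots, each equal to its list `L j`. -/
def partyProfile {C : Type} [Fintype C] [DecidableEq C] {p : ℕ}
    (L : Fin p → Finset C) (v : Fin p → ℕ) : Finset C → ℕ :=
  fun σ => ∑ j, if σ = L j then v j else 0

/-- `m` is a D'Hondt allocation of `M` seats to the vote totals `v`. -/
def IsDHondt {p : ℕ} (v : Fin p → ℕ) (M : ℕ) (m : Fin p → ℕ) : Prop :=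
  (∑ j, m j) = M ∧
  ∀ j k : Fin p, 1 ≤ m k → (v j : ℚ) / ((m j : ℚ) + 1) ≤ (v k : ℚ) / (m k : ℚ)

/-! With party lists the Thiele score of `S` is `∑ⱼ vⱼ H(mⱼ)`, where `H` is the harmonic number
function and `mⱼ = |S ∩ Lⱼ|`. Moving one seat from party `k` to party `j` changes the score by
`vⱼ/(mⱼ+1) - vₖ/mₖ`, so an optimal `S` satisfies the D'Hondt inequalities. Conversely, a D'Hondt
allocation admits `α` with `α mⱼ ≤ vⱼ ≤ α (mⱼ+1)`; concavity of `H` then gives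
`vⱼ (H(m'ⱼ) - H(mⱼ)) ≤ α (m'ⱼ - mⱼ)` for every `m'`, and summing over `j` with `∑ m' = ∑ m`
shows that no other allocation scores higher. -/

open Function

lemma harm_succ (n : ℕ) : harm (n + 1) = harm n + 1 / ((n : ℝ) + 1) := by
  simp [harm, sum_range_succ]

lemma harm_mono : Monotone harm := fun _ _ h =>
  sum_le_sum_of_subset_of_nonneg (range_subset_range.mpr h)
    fun _ _ _ => by positivity

lemma harm_sub_harm_eq_sum_Ico {a b : ℕ} (h : a ≤ b) :
    harm b - harm a = ∑ k ∈ Finset.Ico a b, (1 : ℝ) / (k + 1) :=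
  (sum_Ico_eq_sub _ h).symm

lemma add_one_mul_harm_sub_harm_le {a b : ℕ} (h : a ≤ b) :
    ((a : ℝ) + 1) * (harm b - harm a) ≤ b - a := by
  have hsum := sum_le_card_nsmul (Finset.Ico a b) (fun k => (1 : ℝ) / (k + 1))
    (1 / ((a : ℝ) + 1)) fun k hk => by
      gcongr
      exact_mod_cast (mem_Ico.mp hk).1
  rw [← harm_sub_harm_eq_sum_Ico h, Nat.card_Ico, nsmul_eq_mul, Nat.cast_sub h] at hsum
  rwa [← le_div_iff₀' (by positivity), ← mul_one_div]

lemma sub_le_mul_harm_sub_harm {a b : ℕ} (h : a ≤ b) :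
    (b : ℝ) - a ≤ b * (harm b - harm a) := by
  rcases Nat.eq_zero_or_pos b with rfl | hb
  · simp [Nat.le_zero.mp h]
  have hsum := card_nsmul_le_sum (Finset.Ico a b) (fun k => (1 : ℝ) / (k + 1))
    (1 / (b : ℝ)) fun k hk => by
      gcongr
      exact_mod_cast (mem_Ico.mp hk).2
  rw [← harm_sub_harm_eq_sum_Ico h, Nat.card_Ico, nsmul_eq_mul, Nat.cast_sub h] at hsum
  rwa [← div_le_iff₀' (by positivity), ← mul_one_div]

lemma mul_harm_sub_harm_le_mul {v α : ℝ} {a b : ℕ} (hup : v ≤ α * (a + 1))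
    (hlow : α * a ≤ v) :
    v * (harm b - harm a) ≤ (b - a) * α := by
  have hα : 0 ≤ α := by linarith
  rcases le_total a b with h | h
  · have hH : 0 ≤ harm b - harm a := sub_nonneg.mpr (harm_mono h)
    nlinarith [add_one_mul_harm_sub_harm_le h]
  · have hH : 0 ≤ harm a - harm b := sub_nonneg.mpr (harm_mono h)
    nlinarith [sub_le_mul_harm_sub_harm h]

lemma sum_mul_harm_le_of_divisor {ι : Type*} [Fintype ι] {v : ι → ℝ} {m m' : ι → ℕ} {α : ℝ}
    (hα : ∀ i, v i ≤ α * (m i + 1) ∧ α * m i ≤ v i) (hsum : ∑ i, m' i = ∑ i, m i) :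
    ∑ i, v i * harm (m' i) ≤ ∑ i, v i * harm (m i) := by
  have hterm (i : ι) : v i * harm (m' i) ≤ v i * harm (m i) + ((m' i : ℝ) - m i) * α := by
    linarith [mul_harm_sub_harm_le_mul (b := m' i) (hα i).1 (hα i).2]
  have hsumℝ : ∑ i, (m' i : ℝ) = ∑ i, (m i : ℝ) := by exact_mod_cast hsum
  calc ∑ i, v i * harm (m' i)
      ≤ ∑ i, (v i * harm (m i) + ((m' i : ℝ) - m i) * α) := sum_le_sum fun i _ => hterm i
    _ = ∑ i, v i * harm (m i) := by
      rw [sum_add_distrib, ← sum_mul, sum_sub_distrib, hsumℝ]; ring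

lemma exists_divisor_of_div_le_div {ι : Type*} [Finite ι] {v : ι → ℝ} {m : ι → ℕ}
    (hv : 0 ≤ v) (hdh : ∀ j k, 1 ≤ m k → v j / (m j + 1) ≤ v k / m k) :
    ∃ α : ℝ, ∀ i, v i ≤ α * (m i + 1) ∧ α * m i ≤ v i := by
  cases isEmpty_or_nonempty ι
  · exact ⟨0, isEmptyElim⟩
  obtain ⟨j, hj⟩ := Finite.exists_max fun i => v i / (m i + 1)
  refine ⟨v j / (m j + 1), fun i => ⟨?_, ?_⟩⟩
  · rw [← div_le_iff₀ (by positivity)]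
    exact hj i
  · rcases Nat.eq_zero_or_pos (m i) with h | h
    · simpa [h] using hv i
    · rw [← le_div_iff₀ (by exact_mod_cast h)]
      exact hdh j i h

lemma isDHondt_iff_real {p : ℕ} (v : Fin p → ℕ) (M : ℕ) (m : Fin p → ℕ) :
    IsDHondt v M m ↔ ∑ j, m j = M ∧
      ∀ j k, 1 ≤ m k → (v j : ℝ) / (m j + 1) ≤ v k / m k := by
  simp only [IsDHondt, ← Rat.cast_le (K := ℝ)]
  push_cast
  rfl

lemma thieleF_partyProfile {C : Type} [Fintype C] [DecidableEq C] {p : ℕ}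
    (L : Fin p → Finset C) (v : Fin p → ℕ) (f : ℕ → ℝ) (S : Finset C) :
    thieleF f (partyProfile L v) S = ∑ j, (v j : ℝ) * f (S ∩ L j).card := by
  simp [thieleF, partyProfile, sum_mul, ite_mul, Finset.sum_comm (γ := Finset C),
    inter_comm]

section Partition

variable {ι α : Type*} [DecidableEq α] {L : ι → Finset α}

lemma sum_card_inter_eq_card [Fintype ι] (hL : Pairwise (Disjoint on L))
    (hcover : ∀ a, ∃ i, a ∈ L i) (S : Finset α) :
    ∑ i, (S ∩ L i).card = S.card := by
  rw [← card_biUnion fun i _ j _ hij =>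
    (hL hij).mono inter_subset_right inter_subset_right]
  congr 1
  ext a
  simp only [mem_biUnion, mem_univ, true_and, mem_inter]
  exact ⟨fun ⟨_, ha, _⟩ => ha, fun ha => (hcover a).imp fun _ hi => ⟨ha, hi⟩⟩

lemma exists_move_seat (hL : Pairwise (Disjoint on L)) {S : Finset α} {j k : ι}
    (hjk : j ≠ k) (hj : (S ∩ L j).card < (L j).card) (hk : 0 < (S ∩ L k).card) :
    ∃ T : Finset α, T.card = S.card ∧ (T ∩ L j).card = (S ∩ L j).card + 1 ∧
      (T ∩ L k).card + 1 = (S ∩ L k).card ∧ ∀ i, i ≠ j → i ≠ k → T ∩ L i = S ∩ L i := by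
  obtain ⟨c, hcL, hcSL⟩ := exists_mem_notMem_of_card_lt_card hj
  obtain ⟨d, hd⟩ := card_pos.mp hk
  have hcL' {i} (hi : i ≠ j) : c ∉ L i := disjoint_left.mp (hL hi.symm) hcL
  have hdSL {i} (hi : i ≠ k) : d ∉ S ∩ L i := fun h =>
    disjoint_left.mp (hL hi.symm) (mem_inter.mp hd).2 (mem_of_mem_inter_right h)
  refine ⟨insert c (S.erase d), ?_, ?_, ?_, fun i hij hik => ?_⟩
  · rw [card_insert_of_notMem fun h => hcSL (mem_inter.mpr ⟨mem_of_mem_erase h, hcL⟩),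
      card_erase_add_one (mem_of_mem_inter_left hd)]
  · rw [insert_inter_of_mem hcL, erase_inter, erase_eq_of_notMem (hdSL hjk),
      card_insert_of_notMem hcSL]
  · rw [insert_inter_of_notMem (hcL' hjk.symm), erase_inter, card_erase_add_one hd]
  · rw [insert_inter_of_notMem (hcL' hij), erase_inter, erase_eq_of_notMem (hdSL hik)]

end Partition

lemma div_le_div_of_thieleOptOutcome {C : Type} [Fintype C] [DecidableEq C] {p M : ℕ}
    {L : Fin p → Finset C} {v : Fin p → ℕ} (hL : Pairwise (Disjoint on L)) {S : Finset C}
    (hS : ThieleOptOutcome harm (partyProfile L v) M S) {j k : Fin p} (hjk : j ≠ k)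
    (hj : (S ∩ L j).card < (L j).card) (hk : 0 < (S ∩ L k).card) :
    (v j : ℝ) / ((S ∩ L j).card + 1) ≤ v k / (S ∩ L k).card := by
  obtain ⟨T, hTcard, hTj, hTk, hTi⟩ := exists_move_seat hL hjk hj hk
  have hopt := hS.2 T (hTcard.trans hS.1)
  rw [thieleF_partyProfile, thieleF_partyProfile, ← sub_nonpos, ← sum_sub_distrib,
    Fintype.sum_eq_add j k hjk fun i hi => by rw [hTi i hi.1 hi.2, sub_self]] at hopt
  obtain ⟨n, hn⟩ : ∃ n, (S ∩ L k).card = n + 1 := Nat.exists_eq_add_one.mpr hk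
  rw [hn, Nat.add_right_cancel_iff] at hTk
  rw [hTj, hTk, hn, harm_succ, harm_succ] at hopt
  rw [mul_add, mul_add, mul_one_div, mul_one_div] at hopt
  rw [hn, Nat.cast_add_one]
  linarith

theorem stmt_2_general {C : Type} [Fintype C] [DecidableEq C] (M : ℕ)
    (p : ℕ) (L : Fin p → Finset C) (v : Fin p → ℕ)
    (hdisj : ∀ j k : Fin p, j ≠ k → Disjoint (L j) (L k))
    (hcover : ∀ c : C, ∃ j, c ∈ L j)
    (hsize : ∀ j, M ≤ (L j).card) :
    ∀ S : Finset C, S.card = M →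
      (ThieleOptOutcome harm (partyProfile L v) M S ↔
        IsDHondt v M (fun j => (S ∩ L j).card)) := by
  intro S hS
  have hL : Pairwise (Disjoint on L) := fun j k => hdisj j k
  have hsum : ∑ j, (S ∩ L j).card = M := (sum_card_inter_eq_card hL hcover S).trans hS
  rw [isDHondt_iff_real]
  constructor
  · intro hopt
    refine ⟨hsum, fun j k hk => ?_⟩
    rcases eq_or_ne j k with rfl | hjk
    · exact div_le_div_of_nonneg_left (by positivity) (by exact_mod_cast hk) (by linarith)
    · have : (S ∩ L j).card + (S ∩ L k).card ≤ M :=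
        hsum ▸ add_le_sum (f := fun i => (S ∩ L i).card) (fun _ _ => Nat.zero_le _)
          (mem_univ j) (mem_univ k) hjk
      exact div_le_div_of_thieleOptOutcome hL hopt hjk (by linarith [hsize j]) hk
  · rintro ⟨-, hdh⟩
    refine ⟨hS, fun T hT => ?_⟩
    obtain ⟨α, hα⟩ := exists_divisor_of_div_le_div (fun j => Nat.cast_nonneg (v j)) hdh
    rw [thieleF_partyProfile, thieleF_partyProfile]
    exact sum_mul_harm_le_of_divisor hα (by rw [sum_card_inter_eq_card hL hcover, hT, hsum])

/-- In the party list case, a set `S` with `|S| = M` is a possible outcome of Thiele's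
optimization method with the proportional satisfaction function if and only if the seat
numbers `m j = |S ∩ L j|` form a D'Hondt allocation of `M` seats to `v 1, …, v p`. -/
theorem stmt_2 {C : Type} [Fintype C] [DecidableEq C] (M : ℕ)
    (hM1 : 1 ≤ M) (hM2 : M ≤ Fintype.card C)
    (p : ℕ) (L : Fin p → Finset C) (v : Fin p → ℕ)
    (hdisj : ∀ j k : Fin p, j ≠ k → Disjoint (L j) (L k))
    (hcover : ∀ c : C, ∃ j, c ∈ L j)
    (hsize : ∀ j, M ≤ (L j).card)
    (hv : ∀ j, 0 < v j) :
    ∀ S : Finset C, S.card = M →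
      (ThieleOptOutcome harm (partyProfile L v) M S ↔
        IsDHondt v M (fun j => (S ∩ L j).card)) :=
  stmt_2_general M p L v hdisj hcover hsize
end

section
/- In the party list case, a set S ⊆ C with |S| = M is a possible outcome of Phragmén's unordered method if and only if the seat numbers m_j = |S ∩ L_j| form a D'Hondt allocation of M seats to the vote totals v_1,…,v_p. In particular, Phragmén's unordered method distributes the seats between the parties exactly as D'Hondt's method. -/
open Finset

/-- The number of ballots containing candidate `i` (as a rational number). -/
def phVotes {C : Type} [Fintype C] [DecidableEq C] (v : Finset C → ℕ) (i : C) : ℚ :=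
  ∑ σ ∈ Finset.univ.filter (fun σ : Finset C => i ∈ σ), (v σ : ℚ)

/-- Phragmén's `t_i = (1 + Σ_{σ∋i} v_σ r_σ)/(Σ_{σ∋i} v_σ)` for the current loads `r`. -/
def phT {C : Type} [Fintype C] [DecidableEq C]
    (v : Finset C → ℕ) (r : Finset C → ℚ) (i : C) : ℚ :=
  (1 + ∑ σ ∈ Finset.univ.filter (fun σ : Finset C => i ∈ σ), (v σ : ℚ) * r σ) / phVotes v i

/-- The ballot loads after electing the candidates in the list `l`
(most recently elected first); initially all loads are `0`, and when `i` is
elected the load of every ballot containing `i` is set to `t_i`. -/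
def phLoads {C : Type} [Fintype C] [DecidableEq C] (v : Finset C → ℕ) :
    List C → Finset C → ℚ
  | [], _ => 0
  | i :: l, σ => if i ∈ σ then phT v (phLoads v l) i else phLoads v l σ

/-- `l` (most recently elected first) is a valid sequence of elections for
Phragmén's unordered method: each newly elected candidate is a not yet elected
candidate with positive vote count minimizing `t_i`. -/
def phValid {C : Type} [Fintype C] [DecidableEq C] (v : Finset C → ℕ) : List C → Prop
  | [] => True
  | i :: l => phValid v l ∧ i ∉ l ∧ 0 < phVotes v i ∧
      ∀ j : C, j ∉ l → 0 < phVotes v j →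
        phT v (phLoads v l) i ≤ phT v (phLoads v l) j

/-- `S` is a possible outcome of Phragmén's unordered method for `M` seats:
its elements can be elected in some order by the rule, ties broken arbitrarily. -/
def PhragmenOutcome {C : Type} [Fintype C] [DecidableEq C]
    (v : Finset C → ℕ) (M : ℕ) (S : Finset C) : Prop :=
  ∃ l : List C, phValid v l ∧ l.length = M ∧ l.toFinset = S

section Aux

variable {C : Type} [Fintype C] [DecidableEq C] {p : ℕ}
  (L : Fin p → Finset C) (v : Fin p → ℕ)

/-- number of elements of `l` belonging to party `j` -/
def phCnt (j : Fin p) (l : List C) : ℕ := l.countP (fun c => decide (c ∈ L j))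

variable (pty : C → Fin p)

lemma ph_votes_eq (hpty : ∀ c, c ∈ L (pty c)) (huniq : ∀ c j, c ∈ L j → j = pty c)
    (i : C) : phVotes (partyProfile L v) i = (v (pty i) : ℚ) := by
  unfold phVotes partyProfile
  push_cast
  rw [Finset.sum_comm]
  have h1 : ∀ j : Fin p,
      (∑ σ ∈ Finset.univ.filter (fun σ : Finset C => i ∈ σ),
        if σ = L j then (v j : ℚ) else 0) = if i ∈ L j then (v j : ℚ) else 0 := by
    intro j
    rw [Finset.sum_ite_eq' (Finset.univ.filter (fun σ : Finset C => i ∈ σ)) (L j)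
      (fun _ => (v j : ℚ))]
    simp
  simp only [h1]
  rw [Finset.sum_eq_single (pty i)]
  · simp [hpty]
  · intro j _ hj
    have : i ∉ L j := fun h => hj (huniq i j h)
    simp [this]
  · simp


lemma ph_num_eq (hpty : ∀ c, c ∈ L (pty c)) (huniq : ∀ c j, c ∈ L j → j = pty c)
    (r : Finset C → ℚ) (i : C) :
    (∑ σ ∈ Finset.univ.filter (fun σ : Finset C => i ∈ σ),
      ((partyProfile L v) σ : ℚ) * r σ) = (v (pty i) : ℚ) * r (L (pty i)) := by
  unfold partyProfile
  push_cast
  have h0 : ∀ σ : Finset C, (∑ j, if σ = L j then (v j : ℚ) else 0) * r σ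
      = ∑ j, if σ = L j then (v j : ℚ) * r σ else 0 := by
    intro σ
    rw [Finset.sum_mul]
    exact Finset.sum_congr rfl fun j _ => by split <;> simp
  simp only [h0]
  rw [Finset.sum_comm]
  have h1 : ∀ j : Fin p,
      (∑ σ ∈ Finset.univ.filter (fun σ : Finset C => i ∈ σ),
        if σ = L j then (v j : ℚ) * r σ else 0)
      = if i ∈ L j then (v j : ℚ) * r (L j) else 0 := by
    intro j
    rw [Finset.sum_ite_eq' (Finset.univ.filter (fun σ : Finset C => i ∈ σ)) (L j)
      (fun σ => (v j : ℚ) * r σ)]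
    simp
  simp only [h1]
  rw [Finset.sum_eq_single (pty i)]
  · simp [hpty]
  · intro j _ hj
    have : i ∉ L j := fun h => hj (huniq i j h)
    simp [this]
  · simp

lemma ph_T_eq (hpty : ∀ c, c ∈ L (pty c)) (huniq : ∀ c j, c ∈ L j → j = pty c)
    (r : Finset C → ℚ) (i : C) :
    phT (partyProfile L v) r i
      = (1 + (v (pty i) : ℚ) * r (L (pty i))) / (v (pty i) : ℚ) := by
  unfold phT
  rw [ph_num_eq L v pty hpty huniq r i, ph_votes_eq L v pty hpty huniq i]

lemma ph_loads_eq (hpty : ∀ c, c ∈ L (pty c)) (huniq : ∀ c j, c ∈ L j → j = pty c)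
    (hv : ∀ j, 0 < v j) (l : List C) (j : Fin p) :
    phLoads (partyProfile L v) l (L j) = (phCnt L j l : ℚ) / (v j : ℚ) := by
  induction l with
  | nil => simp [phLoads, phCnt]
  | cons i l ih =>
    have hvj : (v j : ℚ) ≠ 0 := by
      exact_mod_cast (hv j).ne'
    by_cases hij : i ∈ L j
    · have hj : j = pty i := huniq i j hij
      rw [phLoads]
      rw [if_pos hij, ph_T_eq L v pty hpty huniq, ← hj, ih]
      have hcnt : phCnt L j (i :: l) = phCnt L j l + 1 := by
        simp [phCnt, List.countP_cons, hij]
      rw [hcnt]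
      push_cast
      field_simp
      ring
    · rw [phLoads, if_neg hij, ih]
      have hcnt : phCnt L j (i :: l) = phCnt L j l := by
        simp [phCnt, List.countP_cons, hij]
      rw [hcnt]

lemma ph_T_loads_eq (hpty : ∀ c, c ∈ L (pty c)) (huniq : ∀ c j, c ∈ L j → j = pty c)
    (hv : ∀ j, 0 < v j) (l : List C) (i : C) :
    phT (partyProfile L v) (phLoads (partyProfile L v) l) i
      = ((phCnt L (pty i) l : ℚ) + 1) / (v (pty i) : ℚ) := by
  rw [ph_T_eq L v pty hpty huniq, ph_loads_eq L v pty hpty huniq hv]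
  have hvj : (v (pty i) : ℚ) ≠ 0 := by exact_mod_cast (hv (pty i)).ne'
  field_simp
  ring

lemma ph_cnt_card (j : Fin p) (l : List C) (hl : l.Nodup) :
    phCnt L j l = (l.toFinset ∩ L j).card := by
  induction l with
  | nil => simp [phCnt]
  | cons i l ih =>
    have hnd := List.nodup_cons.1 hl
    have hi : i ∉ l.toFinset := by simp [hnd.1]
    by_cases hij : i ∈ L j
    · have : insert i l.toFinset ∩ L j = insert i (l.toFinset ∩ L j) :=
        Finset.insert_inter_of_mem hij
      simp only [List.toFinset_cons, this]
      rw [Finset.card_insert_of_notMem (fun h => hi (Finset.mem_inter.1 h).1)]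
      simpa [phCnt, List.countP_cons, hij] using ih hnd.2
    · have : insert i l.toFinset ∩ L j = l.toFinset ∩ L j :=
        Finset.insert_inter_of_notMem hij
      simp only [List.toFinset_cons, this]
      simpa [phCnt, List.countP_cons, hij] using ih hnd.2

lemma ph_cnt_sum (hpty : ∀ c, c ∈ L (pty c)) (huniq : ∀ c j, c ∈ L j → j = pty c)
    (l : List C) : (∑ j, phCnt L j l) = l.length := by
  induction l with
  | nil => simp [phCnt]
  | cons i l ih =>
    have : ∀ j, phCnt L j (i :: l) = phCnt L j l + (if i ∈ L j then 1 else 0) := by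
      intro j
      by_cases hij : i ∈ L j <;> simp [phCnt, List.countP_cons, hij]
    simp only [this, Finset.sum_add_distrib, ih]
    have : (∑ j, if i ∈ L j then 1 else 0) = 1 := by
      rw [Finset.sum_eq_single (pty i)]
      · simp [hpty]
      · intro j _ hj
        have : i ∉ L j := fun h => hj (huniq i j h)
        simp [this]
      · simp
    rw [this]
    simp [List.length_cons]

lemma ph_valid_suffix (w : Finset C → ℕ) (a b : List C) (h : phValid w (a ++ b)) :
    phValid w b := by
  induction a with
  | nil => exact h
  | cons x a ih => exact ih h.1

lemma ph_valid_nodup (w : Finset C → ℕ) (l : List C) (h : phValid w l) : l.Nodup := by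
  induction l with
  | nil => simp
  | cons i l ih => exact List.nodup_cons.2 ⟨h.2.1, ih h.1⟩

lemma ph_first_split (j : Fin p) (l : List C) (h : 1 ≤ phCnt L j l) :
    ∃ a i b, l = a ++ i :: b ∧ i ∈ L j ∧ phCnt L j a = 0 := by
  induction l with
  | nil => simp [phCnt] at h
  | cons x l ih =>
    by_cases hx : x ∈ L j
    · exact ⟨[], x, l, by simp, hx, by simp [phCnt]⟩
    · have h' : 1 ≤ phCnt L j l := by
        simpa [phCnt, List.countP_cons, hx] using h
      obtain ⟨a, i, b, h1, h2, h3⟩ := ih h'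
      refine ⟨x :: a, i, b, by simp [h1], h2, ?_⟩
      simp only [phCnt, List.countP_cons, hx, decide_eq_true_eq, if_false]
      simpa [phCnt, List.countP_cons, hx] using h3


lemma flip_div {a b c d : ℚ} (ha : 0 < a) (hb : 0 < b) (hc : 0 < c) (hd : 0 < d)
    (h : a / b ≤ c / d) : d / c ≤ b / a := by
  rw [div_le_div_iff₀ hb hd] at h
  rw [div_le_div_iff₀ hc ha]
  nlinarith

lemma ph_build (hpty : ∀ c, c ∈ L (pty c)) (huniq : ∀ c j, c ∈ L j → j = pty c)
    (hv : ∀ j, 0 < v j) :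
    ∀ (n : ℕ) (m : Fin p → ℕ) (S : Finset C), (∑ j, m j) = n →
      (∀ j k, 1 ≤ m k → (v j : ℚ) / ((m j : ℚ) + 1) ≤ (v k : ℚ) / (m k : ℚ)) →
      (∀ j, (S ∩ L j).card = m j) →
      ∃ l, phValid (partyProfile L v) l ∧ l.length = n ∧ l.toFinset = S := by
  intro n
  induction n with
  | zero =>
    intro m S hsum _ hcard
    have hS : S = ∅ := by
      rw [Finset.eq_empty_iff_forall_notMem]
      intro c hc
      have hm : m (pty c) = 0 := Finset.sum_eq_zero_iff.1 hsum (pty c) (Finset.mem_univ _)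
      have h0 := hcard (pty c)
      rw [hm, Finset.card_eq_zero] at h0
      have hmem : c ∈ S ∩ L (pty c) := Finset.mem_inter.2 ⟨hc, hpty c⟩
      rw [h0] at hmem
      exact Finset.notMem_empty c hmem
    exact ⟨[], trivial, rfl, by simp [hS]⟩
  | succ n ih =>
    intro m S hsum hD hcard
    -- find a party with a seat
    have hTne : (Finset.univ.filter (fun k => 1 ≤ m k)).Nonempty := by
      by_contra h
      rw [Finset.not_nonempty_iff_eq_empty, Finset.filter_eq_empty_iff] at h
      have : ∀ j ∈ (Finset.univ : Finset (Fin p)), m j = 0 := by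
        intro j hj; have := h hj; omega
      rw [Finset.sum_eq_zero this] at hsum
      omega
    obtain ⟨k, hkT, hmin⟩ := Finset.exists_min_image _
      (fun k => (v k : ℚ) / (m k : ℚ)) hTne
    have hk : 1 ≤ m k := (Finset.mem_filter.1 hkT).2
    have hcS : ((S ∩ L k)).Nonempty := by
      rw [← Finset.card_pos, hcard k]; omega
    obtain ⟨c, hc⟩ := hcS
    have hcS' : c ∈ S := (Finset.mem_inter.1 hc).1
    have hcL : c ∈ L k := (Finset.mem_inter.1 hc).2
    have hck : pty c = k := (huniq c k hcL).symm
    set m' : Fin p → ℕ := Function.update m k (m k - 1) with hm'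
    have hm'k : m' k = m k - 1 := Function.update_self k _ m
    have hm'ne : ∀ j, j ≠ k → m' j = m j := fun j hj => Function.update_of_ne hj _ m
    -- positivity facts
    have hvq : ∀ j, (0:ℚ) < v j := fun j => by exact_mod_cast hv j
    have hmk : (0:ℚ) < m k := by exact_mod_cast hk
    have hcast : ((m' k : ℚ)) = (m k : ℚ) - 1 := by rw [hm'k]; push_cast [hk]; ring
    -- sum
    have hsum' : (∑ j, m' j) = n := by
      rw [hm', Finset.sum_update_of_mem (Finset.mem_univ k)]
      rw [← Finset.add_sum_erase _ m (Finset.mem_univ k), Finset.erase_eq] at hsum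
      omega
    -- D'Hondt for m'
    have hD' : ∀ j k', 1 ≤ m' k' →
        (v j : ℚ) / ((m' j : ℚ) + 1) ≤ (v k' : ℚ) / (m' k' : ℚ) := by
      intro j k' h1
      by_cases hk' : k' = k
      · subst hk'
        have h2 : 2 ≤ m k' := by omega
        have h2q : (2:ℚ) ≤ (m k' : ℚ) := by exact_mod_cast h2
        have hd1 : (0:ℚ) < (m k' : ℚ) - 1 := by linarith
        by_cases hj : j = k'
        · subst hj
          rw [hcast]
          rw [div_le_div_iff₀ (by linarith) hd1]
          nlinarith [(hvq j).le]
        · rw [hm'ne j hj, hcast]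
          have step1 : (v j : ℚ) / ((m j : ℚ) + 1) ≤ (v k' : ℚ) / (m k' : ℚ) :=
            hD j k' hk
          have step2 : (v k' : ℚ) / (m k' : ℚ) ≤ (v k' : ℚ) / ((m k' : ℚ) - 1) := by
            rw [div_le_div_iff₀ (by linarith) hd1]
            nlinarith [(hvq k').le]
          linarith
      · rw [hm'ne k' hk']
        have hk'1 : 1 ≤ m k' := by
          have := hm'ne k' hk'
          omega
        have hk'T : k' ∈ Finset.univ.filter (fun k => 1 ≤ m k) := by
          simp [hk'1]
        by_cases hj : j = k
        · subst hj
          rw [hcast]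
          have hq : (m j : ℚ) - 1 + 1 = (m j : ℚ) := by ring
          rw [hq]
          exact hmin k' hk'T
        · rw [hm'ne j hj]
          exact hD j k' hk'1
    -- cards
    have hcard' : ∀ j, ((S.erase c) ∩ L j).card = m' j := by
      intro j
      by_cases hj : j = k
      · subst hj
        have : (S.erase c) ∩ L j = (S ∩ L j).erase c := by
          ext x
          simp only [Finset.mem_inter, Finset.mem_erase]
          tauto
        rw [this, Finset.card_erase_of_mem hc, hcard j, hm'k]
      · have hcLj : c ∉ L j := fun h => hj ((huniq c j h).trans hck)
        have : (S.erase c) ∩ L j = S ∩ L j := by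
          ext x
          simp only [Finset.mem_inter, Finset.mem_erase]
          constructor
          · tauto
          · rintro ⟨h1, h2⟩
            exact ⟨⟨fun he => hcLj (he ▸ h2), h1⟩, h2⟩
        rw [this, hcard j, hm'ne j hj]
    obtain ⟨l', hval', hlen', htf'⟩ := ih m' (S.erase c) hsum' hD' hcard'
    have hnd' : l'.Nodup := ph_valid_nodup _ l' hval'
    have hcnl' : c ∉ l' := by
      intro hmem
      have : c ∈ S.erase c := htf' ▸ List.mem_toFinset.2 hmem
      simp at this
    have hcnt' : ∀ j, phCnt L j l' = m' j := by
      intro j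
      rw [ph_cnt_card L j l' hnd', htf', hcard' j]
    refine ⟨c :: l', ⟨hval', hcnl', ?_, ?_⟩, by simp [hlen'], ?_⟩
    · rw [ph_votes_eq L v pty hpty huniq]; exact hvq _
    · intro j' hj' _
      rw [ph_T_loads_eq L v pty hpty huniq hv, ph_T_loads_eq L v pty hpty huniq hv]
      rw [hcnt', hcnt', hck]
      have hnum : ((m' k : ℚ)) + 1 = (m k : ℚ) := by rw [hcast]; ring
      rw [hnum]
      set q := pty j' with hq
      by_cases hqk : q = k
      · rw [hqk, hnum]
      · rw [hm'ne q hqk]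
        have := hD q k hk
        exact flip_div (hvq q) (by positivity) (hvq k) hmk this
    · simp only [List.toFinset_cons, htf']
      exact Finset.insert_erase hcS'

end Aux

/-- In the party list case, a set `S` with `|S| = M` is a possible outcome of
Phragmén's unordered method if and only if the seat numbers `m j = |S ∩ L j|`
form a D'Hondt allocation of `M` seats to the vote totals. -/
theorem stmt_3 {C : Type} [Fintype C] [DecidableEq C] (M : ℕ)
    (hM1 : 1 ≤ M) (hM2 : M ≤ Fintype.card C)
    (p : ℕ) (L : Fin p → Finset C) (v : Fin p → ℕ)
    (hdisj : ∀ j k : Fin p, j ≠ k → Disjoint (L j) (L k))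
    (hcover : ∀ c : C, ∃ j, c ∈ L j)
    (hsize : ∀ j, M ≤ (L j).card)
    (hv : ∀ j, 0 < v j) :
    ∀ S : Finset C, S.card = M →
      (PhragmenOutcome (partyProfile L v) M S ↔
        IsDHondt v M (fun j => (S ∩ L j).card)) := by
  choose pty hpty using hcover
  have huniq : ∀ c j, c ∈ L j → j = pty c := by
    intro c j h
    by_contra hne
    exact Finset.disjoint_left.1 (hdisj j (pty c) hne) h (hpty c)
  have hvq : ∀ j, (0:ℚ) < (v j : ℚ) := fun j => by exact_mod_cast hv j
  intro S hScard
  constructor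
  · rintro ⟨l, hval, hlen, htf⟩
    have hnd : l.Nodup := ph_valid_nodup _ l hval
    have hcnt : ∀ j, phCnt L j l = (S ∩ L j).card := by
      intro j; rw [ph_cnt_card L j l hnd, htf]
    constructor
    · have h1 : (∑ j, (S ∩ L j).card) = l.length := by
        rw [← ph_cnt_sum L pty hpty huniq l]
        exact Finset.sum_congr rfl fun j _ => (hcnt j).symm
      simpa [hlen] using h1
    · intro j k hk
      simp only at hk ⊢
      have hk1 : 1 ≤ phCnt L k l := by rw [hcnt k]; exact hk
      obtain ⟨a, i, b, hsplit, hiL, ha0⟩ := ph_first_split L k l hk1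
      have hib : phValid (partyProfile L v) (i :: b) := by
        rw [hsplit] at hval; exact ph_valid_suffix _ a _ hval
      have hblen : b.length + 1 ≤ M := by
        have h2 := hlen; rw [hsplit] at h2
        simp [List.length_append] at h2; omega
      have hbsub : ¬ (L j ⊆ b.toFinset) := by
        intro hsub
        have h1 := Finset.card_le_card hsub
        have h2 : b.toFinset.card ≤ b.length := b.toFinset_card_le
        have h3 := hsize j
        omega
      obtain ⟨c, hcL, hcb⟩ := Finset.not_subset.1 hbsub
      have hcb' : c ∉ b := fun h => hcb (List.mem_toFinset.2 h)
      have hpos : 0 < phVotes (partyProfile L v) c := by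
        rw [ph_votes_eq L v pty hpty huniq]; exact hvq _
      have hmin := hib.2.2.2 c hcb' hpos
      rw [ph_T_loads_eq L v pty hpty huniq hv,
        ph_T_loads_eq L v pty hpty huniq hv] at hmin
      have hpi : pty i = k := (huniq i k hiL).symm
      have hpc : pty c = j := (huniq c j hcL).symm
      rw [hpi, hpc] at hmin
      have hcntk : (phCnt L k b) + 1 = (S ∩ L k).card := by
        have e1 : phCnt L k l = phCnt L k a + phCnt L k (i :: b) := by
          rw [hsplit]; simp [phCnt, List.countP_append]
        have e2 : phCnt L k (i :: b) = phCnt L k b + 1 := by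
          simp [phCnt, List.countP_cons, hiL]
        have e3 := hcnt k
        omega
      have hcntj : phCnt L j b ≤ (S ∩ L j).card := by
        rw [← hcnt j]
        apply List.Sublist.countP_le
        rw [hsplit]
        exact (List.sublist_cons_self i b).trans (List.sublist_append_right a (i :: b))
      have hck : (0:ℚ) < ((S ∩ L k).card : ℚ) := by exact_mod_cast hk
      have step1 : ((S ∩ L k).card : ℚ) / (v k : ℚ)
          ≤ ((phCnt L j b : ℚ) + 1) / (v j : ℚ) := by
        have : ((phCnt L k b : ℚ) + 1) = ((S ∩ L k).card : ℚ) := by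
          exact_mod_cast congrArg (Nat.cast (R := ℚ)) hcntk
        rw [← this]; exact hmin
      have step2 : ((phCnt L j b : ℚ) + 1) / (v j : ℚ)
          ≤ (((S ∩ L j).card : ℚ) + 1) / (v j : ℚ) := by
        have hle : (phCnt L j b : ℚ) ≤ ((S ∩ L j).card : ℚ) := by exact_mod_cast hcntj
        gcongr
      have final := le_trans step1 step2
      exact flip_div hck (hvq k) (by positivity) (hvq j) final
  · rintro ⟨hsum, hineq⟩
    simp only at hsum hineq
    obtain ⟨l, h1, h2, h3⟩ := ph_build L v pty hpty huniq hv M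
      (fun j => (S ∩ L j).card) S hsum hineq (fun j => rfl)
    exact ⟨l, h1, h2, h3⟩
end

section
/- Let f be a satisfaction function with f(0) = 0 and nonnegative weights w_k ≥ 0, let A ∈ C, and let the profile v′ be obtained from v by adding new ballots containing only A and/or changing some ballots σ with A ∉ σ into σ ∪ {A}, with no other changes (so every candidate other than A receives exactly the same votes as before). If some possible outcome of Thiele's optimization method with satisfaction f on v for M seats contains A, then some possible outcome on v′ for M seats contains A. -/
open Finset

/- Adding `A` to ballots (or adding ballots `{A}`) leaves the total satisfaction of a
committee without `A` unchanged, since `f 0 = 0`, and can only raise that of any committee,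
since `f` is monotone. So if every new optimum omits `A`, its value is at most the old
optimum, which is attained by a committee with `A` whose value did not decrease; that
committee is then optimal for the new profile as well. -/

theorem Set.exists_max_image_and_of_eq_of_le {ι α : Type*} [Finite ι] [LinearOrder α]
    {s : Set ι} {F F' : ι → α} {p : ι → Prop} {S : ι}
    (hS : S ∈ s) (hSmax : ∀ T ∈ s, F T ≤ F S) (hpS : p S)
    (heq : ∀ T ∈ s, ¬p T → F' T = F T) (hle : ∀ T ∈ s, p T → F T ≤ F' T) :
    ∃ S', (S' ∈ s ∧ ∀ T ∈ s, F' T ≤ F' S') ∧ p S' := by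
  obtain ⟨S', hS', hS'max⟩ := s.exists_max_image F' s.toFinite ⟨S, hS⟩
  by_cases hpS' : p S'
  · exact ⟨S', ⟨hS', hS'max⟩, hpS'⟩
  refine ⟨S, ⟨hS, fun T hT => ?_⟩, hpS⟩
  calc F' T ≤ F' S' := hS'max T hT
    _ = F S' := heq S' hS' hpS'
    _ ≤ F S := hSmax S' hS'
    _ ≤ F' S := hle S hS hpS

section Thiele

variable {C : Type} [Fintype C] [DecidableEq C] (f : ℕ → ℝ) (A : C)

theorem thieleF_eq_sum_powerset_erase (v : Finset C → ℕ) (T : Finset C) :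
    thieleF f v T = ∑ τ ∈ (univ.erase A).powerset,
      ((v τ : ℝ) * f (τ ∩ T).card + v (insert A τ) * f (insert A τ ∩ T).card) := by
  have huniv : (univ : Finset (Finset C)) = (insert A (univ.erase A)).powerset := by
    rw [insert_erase (mem_univ A), powerset_univ]
  rw [thieleF, huniv, sum_powerset_insert (notMem_erase A univ), sum_add_distrib]

variable {f A} {v v' d : Finset C → ℕ} {a : ℕ}

theorem thieleF_eq_add_sum_of_move
    (hd : ∀ σ : Finset C, A ∉ σ → d σ ≤ v σ)
    (hfree : ∀ σ : Finset C, A ∉ σ → v' σ = v σ - d σ)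
    (hwith : ∀ σ : Finset C, A ∈ σ →
      v' σ = v σ + d (σ.erase A) + (if σ = {A} then a else 0))
    (T : Finset C) :
    thieleF f v' T = thieleF f v T + ∑ τ ∈ (univ.erase A).powerset,
      ((d τ : ℝ) * (f (insert A τ ∩ T).card - f (τ ∩ T).card) +
        (if insert A τ = {A} then (a : ℝ) else 0) * f (insert A τ ∩ T).card) := by
  rw [thieleF_eq_sum_powerset_erase f A v', thieleF_eq_sum_powerset_erase f A v,
    ← sum_add_distrib]
  refine sum_congr rfl fun τ hτ => ?_
  have hAτ : A ∉ τ := fun h => notMem_erase A univ (mem_powerset.1 hτ h)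
  rw [hfree τ hAτ, hwith _ (mem_insert_self A τ), erase_insert hAτ, Nat.cast_sub (hd τ hAτ)]
  push_cast
  ring

theorem thieleF_eq_of_move_of_notMem (hf0 : f 0 = 0)
    (hd : ∀ σ : Finset C, A ∉ σ → d σ ≤ v σ)
    (hfree : ∀ σ : Finset C, A ∉ σ → v' σ = v σ - d σ)
    (hwith : ∀ σ : Finset C, A ∈ σ →
      v' σ = v σ + d (σ.erase A) + (if σ = {A} then a else 0))
    {T : Finset C} (hAT : A ∉ T) :
    thieleF f v' T = thieleF f v T := by
  rw [thieleF_eq_add_sum_of_move hd hfree hwith T, add_eq_left]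
  refine sum_eq_zero fun τ _ => ?_
  rw [insert_inter_of_notMem hAT, sub_self, mul_zero, zero_add]
  split_ifs with hτ
  · rw [← insert_inter_of_notMem hAT, hτ, singleton_inter_of_notMem hAT, card_empty, hf0,
      mul_zero]
  · exact zero_mul _

theorem thieleF_le_of_move (hf0 : f 0 = 0) (hmono : Monotone f)
    (hd : ∀ σ : Finset C, A ∉ σ → d σ ≤ v σ)
    (hfree : ∀ σ : Finset C, A ∉ σ → v' σ = v σ - d σ)
    (hwith : ∀ σ : Finset C, A ∈ σ →
      v' σ = v σ + d (σ.erase A) + (if σ = {A} then a else 0))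
    (T : Finset C) :
    thieleF f v T ≤ thieleF f v' T := by
  rw [thieleF_eq_add_sum_of_move hd hfree hwith T, le_add_iff_nonneg_right]
  refine sum_nonneg fun τ _ => add_nonneg ?_ (mul_nonneg ?_ ?_)
  · exact mul_nonneg (Nat.cast_nonneg _) <| sub_nonneg.2 <| hmono <| card_le_card <|
      inter_subset_inter (subset_insert A τ) subset_rfl
  · split_ifs <;> positivity
  · exact hf0 ▸ hmono (Nat.zero_le _)

end Thiele

theorem stmt_6_general {C : Type} [Fintype C] [DecidableEq C]
    (f : ℕ → ℝ) (hf0 : f 0 = 0) (hmono : Monotone f)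
    (v v' : Finset C → ℕ) (A : C) (d : Finset C → ℕ) (a : ℕ)
    (hd : ∀ σ : Finset C, A ∉ σ → d σ ≤ v σ)
    (hfree : ∀ σ : Finset C, A ∉ σ → v' σ = v σ - d σ)
    (hwith : ∀ σ : Finset C, A ∈ σ →
      v' σ = v σ + d (σ.erase A) + (if σ = {A} then a else 0))
    (M : ℕ)
    (h : ∃ S : Finset C, ThieleOptOutcome f v M S ∧ A ∈ S) :
    ∃ S' : Finset C, ThieleOptOutcome f v' M S' ∧ A ∈ S' := by
  obtain ⟨S, hS, hAS⟩ := h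
  exact Set.exists_max_image_and_of_eq_of_le (s := {T | T.card = M})
    (p := (A ∈ ·)) hS.1 hS.2 hAS
    (fun T _ hAT => thieleF_eq_of_move_of_notMem hf0 hd hfree hwith hAT)
    (fun T _ _ => thieleF_le_of_move hf0 hmono hd hfree hwith T)

/-- Monotonicity of Thiele's optimization method: let `f` be a satisfaction function
with `f 0 = 0` and nonnegative weights (`Monotone f`), and let the profile `v'` be
obtained from `v` by adding `a` new ballots containing only `A` and, for each
ballot type `σ` with `A ∉ σ`, changing `d σ ≤ v σ` ballots of type `σ` into
`σ ∪ {A}` (no other changes).  If some possible outcome on `v` for `M` seats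
contains `A`, then some possible outcome on `v'` for `M` seats contains `A`. -/
theorem stmt_6 {C : Type} [Fintype C] [DecidableEq C]
    (f : ℕ → ℝ) (hf0 : f 0 = 0) (hmono : Monotone f)
    (v v' : Finset C → ℕ) (A : C) (d : Finset C → ℕ) (a : ℕ)
    (hd : ∀ σ : Finset C, A ∉ σ → d σ ≤ v σ)
    (hfree : ∀ σ : Finset C, A ∉ σ → v' σ = v σ - d σ)
    (hwith : ∀ σ : Finset C, A ∈ σ →
      v' σ = v σ + d (σ.erase A) + (if σ = {A} then a else 0))
    (M : ℕ) (hM1 : 1 ≤ M) (hM2 : M ≤ Fintype.card C)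
    (h : ∃ S : Finset C, ThieleOptOutcome f v M S ∧ A ∈ S) :
    ∃ S' : Finset C, ThieleOptOutcome f v' M S' ∧ A ∈ S' :=
  stmt_6_general f hf0 hmono v v' A d a hd hfree hwith M h
end

section
/- Let A ∈ C and let the profile v′ be obtained from v by adding new ballots containing only A and/or changing some ballots σ with A ∉ σ into σ ∪ {A}, with no other changes (so every candidate other than A receives exactly the same votes as before). If some possible outcome of Phragmén's unordered method on v for M seats contains A, then some possible outcome of Phragmén's unordered method on v′ for M seats contains A. -/
open Finset

/-!
While `A` is not elected, no ballot load depends on whether the ballot contains `A`. Forgetting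
`A` on every ballot, `v` and `v'` differ only in their numbers of empty ballots, so every
candidate other than `A` has the same vote count and the same `t_j` under both profiles.
Replay on `v'` the elections that preceded `A` on `v`: either `A` becomes a minimizer on the
way, or the whole replay succeeds and `A` is a minimizer then, since the ballots it gains carry
loads at most `t_A` and so cannot raise `t_A`. Arbitrary further elections fill the other seats.
-/

variable {C : Type} [DecidableEq C]

/-- `v'` arises from `v` by adding `A` to existing ballots and casting new ballots `{A}`. -/
structure RaisesCandidate (A : C) (v v' : Finset C → ℕ) : Prop where
  le_of_mem : ∀ σ, A ∈ σ → v σ ≤ v' σ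
  add_insert_eq : ∀ τ, A ∉ τ → τ.Nonempty → v' τ + v' (insert A τ) = v τ + v (insert A τ)

lemma raisesCandidate_of_transfer {v v' : Finset C → ℕ} {A : C} {d : Finset C → ℕ} {a : ℕ}
    (hd : ∀ σ : Finset C, A ∉ σ → d σ ≤ v σ)
    (hfree : ∀ σ : Finset C, A ∉ σ → v' σ = v σ - d σ)
    (hwith : ∀ σ : Finset C, A ∈ σ →
      v' σ = v σ + d (σ.erase A) + (if σ = {A} then a else 0)) :
    RaisesCandidate A v v' where
  le_of_mem σ hσ := by rw [hwith σ hσ]; omega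
  add_insert_eq τ hAτ hτ := by
    have hne : insert A τ ≠ {A} := fun h =>
      hτ.ne_empty (by simpa [erase_insert hAτ] using congrArg (erase · A) h)
    rw [hfree τ hAτ, hwith _ (mem_insert_self A τ), erase_insert hAτ, if_neg hne]
    have := hd τ hAτ
    omega

variable [Fintype C]

def phSupported (v : Finset C → ℕ) : Finset C := {c | 0 < phVotes v c}

lemma phT_mono {v : Finset C → ℕ} {r r' : Finset C → ℚ} {j : C} (hr : r ≤ r')
    (hj : 0 < phVotes v j) : phT v r j ≤ phT v r' j := by
  unfold phT
  gcongr with σ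
  exact hr σ

namespace phValid

variable {v : Finset C → ℕ}

lemma of_append {p q : List C} (h : phValid v (p ++ q)) : phValid v q := by
  induction p with
  | nil => exact h
  | cons _ p ih => exact ih h.1

lemma nodup {l : List C} (h : phValid v l) : l.Nodup := by
  induction l with
  | nil => exact List.nodup_nil
  | cons _ _ ih => exact List.nodup_cons.2 ⟨h.2.1, ih h.1⟩

lemma subset_phSupported {l : List C} (h : phValid v l) : l.toFinset ⊆ phSupported v := by
  induction l with
  | nil => simp
  | cons i l ih =>
    rw [List.toFinset_cons, insert_subset_iff]
    exact ⟨by simpa [phSupported] using h.2.2.1, ih h.1⟩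

lemma length_le_card_phSupported {l : List C} (h : phValid v l) :
    l.length ≤ #(phSupported v) := by
  rw [← List.toFinset_card_of_nodup h.nodup]
  exact card_le_card h.subset_phSupported

lemma exists_cons {l : List C} (h : phValid v l) (hl : l.length < #(phSupported v)) :
    ∃ i, phValid v (i :: l) := by
  have hne : (phSupported v \ l.toFinset).Nonempty := by
    rw [← card_pos]
    have := le_card_sdiff l.toFinset (phSupported v)
    have := l.toFinset_card_le
    omega
  obtain ⟨i, hi, hmin⟩ := exists_min_image _ (phT v (phLoads v l)) hne
  simp only [mem_sdiff, phSupported, mem_filter, mem_univ, true_and, List.mem_toFinset] at hi hmin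
  exact ⟨i, h, hi.2, hi.1, fun j hj hpj => hmin j ⟨hpj, hj⟩⟩

lemma exists_extend {l : List C} (h : phValid v l) {n : ℕ}
    (hn : l.length + n ≤ #(phSupported v)) :
    ∃ l', phValid v l' ∧ l'.length = l.length + n ∧ l <:+ l' := by
  induction n with
  | zero => exact ⟨l, h, rfl, List.suffix_refl l⟩
  | succ n ih =>
    obtain ⟨l', hl', hlen, hsuf⟩ := ih (by omega)
    obtain ⟨i, hi⟩ := hl'.exists_cons (by omega)
    exact ⟨i :: l', hi, by rw [List.length_cons, hlen]; omega, hsuf.trans (List.suffix_cons i l')⟩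

lemma phLoads_le_phT {l : List C} (h : phValid v l) {j : C}
    (hjl : j ∉ l) (hj : 0 < phVotes v j) (σ : Finset C) :
    phLoads v l σ ≤ phT v (phLoads v l) j := by
  induction l generalizing j σ with
  | nil =>
    unfold phT
    simp only [phLoads, mul_zero, sum_const_zero, add_zero]
    positivity
  | cons i l ih =>
    obtain ⟨hl, hil, hi, hmin⟩ := h
    have hjl' : j ∉ l := fun hj' => hjl (List.mem_cons_of_mem i hj')
    have hgrow : phLoads v l ≤ phLoads v (i :: l) := fun τ => by
      by_cases hiτ : i ∈ τ
      · simpa [phLoads, hiτ] using ih hl hil hi τ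
      · simp [phLoads, hiτ]
    have hstep := phT_mono hgrow hj
    by_cases hiσ : i ∈ σ
    · simpa [phLoads, hiσ] using (hmin j hjl' hj).trans hstep
    · simpa [phLoads, hiσ] using (ih hl hjl' hj σ).trans hstep

end phValid

lemma phLoads_insert_of_notMem {v : Finset C → ℕ} {A : C} {l : List C} (hA : A ∉ l)
    (σ : Finset C) : phLoads v l (insert A σ) = phLoads v l σ := by
  induction l with
  | nil => rfl
  | cons i l ih =>
    have hiA : i ≠ A := fun h => hA (h ▸ List.mem_cons_self)
    simp [phLoads, mem_insert, hiA, ih (fun h => hA (List.mem_cons_of_mem i h))]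

lemma sum_eq_sum_powerset_erase {M : Type*} [AddCommMonoid M] (A : C) (g : Finset C → M) :
    ∑ σ, g σ = ∑ t ∈ (univ.erase A).powerset, (g t + g (insert A t)) := by
  rw [sum_add_distrib, ← sum_powerset_insert (notMem_erase A univ), insert_erase (mem_univ A),
    powerset_univ]

namespace RaisesCandidate

variable {A : C} {v v' : Finset C → ℕ}

lemma sum_mem_mul_eq (hv : RaisesCandidate A v v') {j : C} (hj : j ≠ A) {r : Finset C → ℚ}
    (hr : ∀ σ, r (insert A σ) = r σ) :
    ∑ σ ∈ Finset.univ.filter (fun σ : Finset C => j ∈ σ), (v' σ : ℚ) * r σ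
      = ∑ σ ∈ Finset.univ.filter (fun σ : Finset C => j ∈ σ), (v σ : ℚ) * r σ := by
  simp only [sum_filter]
  rw [sum_eq_sum_powerset_erase A, sum_eq_sum_powerset_erase A]
  refine sum_congr rfl fun t ht => ?_
  have hAt : A ∉ t := fun h => by simpa using mem_powerset.1 ht h
  simp only [mem_insert, hj, false_or]
  split_ifs with hjt
  · have hsum : (v' t : ℚ) + v' (insert A t) = v t + v (insert A t) := by
      exact_mod_cast hv.add_insert_eq t hAt ⟨j, hjt⟩
    rw [hr t, ← add_mul, ← add_mul, hsum]
  · rfl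

lemma phVotes_eq (hv : RaisesCandidate A v v') {j : C} (hj : j ≠ A) :
    phVotes v' j = phVotes v j := by
  simpa [phVotes] using hv.sum_mem_mul_eq hj (r := 1) fun _ => rfl

lemma phVotes_le (hv : RaisesCandidate A v v') : phVotes v A ≤ phVotes v' A :=
  sum_le_sum fun σ hσ => by exact_mod_cast hv.le_of_mem σ (by simpa using hσ)

lemma phSupported_subset (hv : RaisesCandidate A v v') : phSupported v ⊆ phSupported v' := by
  intro c
  simp only [phSupported, mem_filter, mem_univ, true_and]
  obtain rfl | hc := eq_or_ne c A
  · exact fun h => h.trans_le hv.phVotes_le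
  · exact fun h => (hv.phVotes_eq hc).symm ▸ h

lemma phT_eq (hv : RaisesCandidate A v v') {j : C} (hj : j ≠ A) {r : Finset C → ℚ}
    (hr : ∀ σ, r (insert A σ) = r σ) : phT v' r j = phT v r j := by
  unfold phT
  rw [hv.phVotes_eq hj, hv.sum_mem_mul_eq hj hr]

lemma phLoads_eq (hv : RaisesCandidate A v v') {l : List C} (hA : A ∉ l) :
    phLoads v' l = phLoads v l := by
  induction l with
  | nil => rfl
  | cons i l ih =>
    have hAl : A ∉ l := fun h => hA (List.mem_cons_of_mem i h)
    have hiA : i ≠ A := fun h => hA (h ▸ List.mem_cons_self)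
    funext σ
    simp only [phLoads, ih hAl, hv.phT_eq hiA (phLoads_insert_of_notMem hAl)]

lemma phT_phLoads_eq (hv : RaisesCandidate A v v') {l : List C} (hA : A ∉ l) {j : C}
    (hj : j ≠ A) : phT v' (phLoads v' l) j = phT v (phLoads v l) j := by
  rw [hv.phLoads_eq hA, hv.phT_eq hj (phLoads_insert_of_notMem hA)]

/-- The ballots gained by `A` carry loads at most `t_A`, so they can only lower `t_A`. -/
lemma phT_le (hv : RaisesCandidate A v v') (hA : 0 < phVotes v A) {r : Finset C → ℚ}
    (hr : ∀ σ, A ∈ σ → r σ ≤ phT v r A) : phT v' r A ≤ phT v r A := by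
  set T := phT v r A
  have hA' : 0 < phVotes v' A := hA.trans_le hv.phVotes_le
  have hT : 1 + ∑ σ ∈ Finset.univ.filter (fun σ : Finset C => A ∈ σ), (v σ : ℚ) * r σ
      = phVotes v A * T := by
    simp only [T, phT]
    field_simp
  have hgain : ∑ σ ∈ Finset.univ.filter (fun σ : Finset C => A ∈ σ), (v' σ : ℚ) * r σ
      - ∑ σ ∈ Finset.univ.filter (fun σ : Finset C => A ∈ σ), (v σ : ℚ) * r σ
      ≤ (phVotes v' A - phVotes v A) * T := by
    simp only [phVotes, ← sum_sub_distrib, sum_mul, ← sub_mul]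
    refine sum_le_sum fun σ hσ => mul_le_mul_of_nonneg_left (hr σ (by simpa using hσ)) ?_
    exact sub_nonneg.2 (by exact_mod_cast hv.le_of_mem σ (by simpa using hσ))
  rw [phT, div_le_iff₀ hA']
  linarith

lemma phT_le_of_phValid_cons (hv : RaisesCandidate A v v') {i : C} {q : List C}
    (hq : phValid v (i :: q)) (hAq : A ∉ q) (hi : i ≠ A) {j : C} (hjq : j ∉ q) (hjA : j ≠ A)
    (hj : 0 < phVotes v' j) : phT v' (phLoads v' q) i ≤ phT v' (phLoads v' q) j := by
  rw [hv.phT_phLoads_eq hAq hi, hv.phT_phLoads_eq hAq hjA]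
  exact hq.2.2.2 j hjq (hv.phVotes_eq hjA ▸ hj)

lemma phValid_or_exists_cons (hv : RaisesCandidate A v v') (hA : 0 < phVotes v A)
    {q : List C} (hq : phValid v q) (hAq : A ∉ q) :
    phValid v' q ∨ ∃ l, l <:+ q ∧ phValid v' (A :: l) := by
  induction q with
  | nil => exact Or.inl trivial
  | cons i q ih =>
    have hAq' : A ∉ q := fun h => hAq (List.mem_cons_of_mem i h)
    have hiA : i ≠ A := fun h => hAq (h ▸ List.mem_cons_self)
    obtain hq' | ⟨l, hlq, hl⟩ := ih hq.1 hAq'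
    · by_cases hAi : phT v' (phLoads v' q) A ≤ phT v' (phLoads v' q) i
      · refine Or.inr ⟨q, List.suffix_cons i q, hq', hAq', hA.trans_le hv.phVotes_le,
          fun j hjq hj => ?_⟩
        obtain rfl | hjA := eq_or_ne j A
        · exact le_rfl
        · exact hAi.trans (hv.phT_le_of_phValid_cons hq hAq' hiA hjq hjA hj)
      · refine Or.inl ⟨hq', hq.2.1, hv.phVotes_eq hiA ▸ hq.2.2.1, fun j hjq hj => ?_⟩
        obtain rfl | hjA := eq_or_ne j A
        · exact (not_le.1 hAi).le
        · exact hv.phT_le_of_phValid_cons hq hAq' hiA hjq hjA hj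
    · exact Or.inr ⟨l, hlq.trans (List.suffix_cons i q), hl⟩

lemma exists_phValid_cons (hv : RaisesCandidate A v v') {q : List C} (hq : phValid v (A :: q)) :
    ∃ l, l <:+ q ∧ phValid v' (A :: l) := by
  obtain ⟨hq, hAq, hA, hmin⟩ := hq
  obtain hq' | hl := hv.phValid_or_exists_cons hA hq hAq
  swap
  · exact hl
  refine ⟨q, List.suffix_refl q, hq', hAq, hA.trans_le hv.phVotes_le, fun j hjq hj => ?_⟩
  obtain rfl | hjA := eq_or_ne j A
  · exact le_rfl
  calc phT v' (phLoads v' q) A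
      = phT v' (phLoads v q) A := by rw [hv.phLoads_eq hAq]
    _ ≤ phT v (phLoads v q) A :=
      hv.phT_le hA fun σ _ => hq.phLoads_le_phT hAq hA σ
    _ ≤ phT v (phLoads v q) j := hmin j hjq (hv.phVotes_eq hjA ▸ hj)
    _ = phT v' (phLoads v' q) j := (hv.phT_phLoads_eq hAq hjA).symm

end RaisesCandidate

theorem stmt_7_general {C : Type} [Fintype C] [DecidableEq C]
    (v v' : Finset C → ℕ) (A : C) (d : Finset C → ℕ) (a : ℕ)
    (hd : ∀ σ : Finset C, A ∉ σ → d σ ≤ v σ)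
    (hfree : ∀ σ : Finset C, A ∉ σ → v' σ = v σ - d σ)
    (hwith : ∀ σ : Finset C, A ∈ σ →
      v' σ = v σ + d (σ.erase A) + (if σ = {A} then a else 0))
    (M : ℕ)
    (h : ∃ S : Finset C, PhragmenOutcome v M S ∧ A ∈ S) :
    ∃ S' : Finset C, PhragmenOutcome v' M S' ∧ A ∈ S' := by
  obtain ⟨S, ⟨l, hl, rfl, rfl⟩, hAS⟩ := h
  have hv := raisesCandidate_of_transfer hd hfree hwith
  obtain ⟨p, q, rfl⟩ := List.append_of_mem (List.mem_toFinset.1 hAS)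
  obtain ⟨l', hl'q, hl'⟩ := hv.exists_phValid_cons hl.of_append
  have hlen : (A :: l').length ≤ (p ++ A :: q).length := by
    simp only [List.length_cons, List.length_append]
    have := hl'q.length_le
    omega
  obtain ⟨w, hw, hwlen, hsuf⟩ := hl'.exists_extend (n := (p ++ A :: q).length - (A :: l').length)
    (by have := hl.length_le_card_phSupported.trans (card_le_card hv.phSupported_subset); omega)
  exact ⟨w.toFinset, ⟨w, hw, by omega, rfl⟩, List.mem_toFinset.2 (hsuf.subset List.mem_cons_self)⟩

/-- Monotonicity of Phragmén's unordered method: let the profile `v'` be obtained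
from `v` by adding `a` new ballots containing only `A` and, for each ballot type
`σ` with `A ∉ σ`, changing `d σ ≤ v σ` ballots of type `σ` into `σ ∪ {A}`
(no other changes, so every candidate other than `A` receives exactly the same
votes as before).  If some possible outcome of Phragmén's unordered method on `v`
for `M` seats contains `A`, then some possible outcome on `v'` for `M` seats
contains `A`. -/
theorem stmt_7 {C : Type} [Fintype C] [DecidableEq C]
    (v v' : Finset C → ℕ) (A : C) (d : Finset C → ℕ) (a : ℕ)
    (hd : ∀ σ : Finset C, A ∉ σ → d σ ≤ v σ)
    (hfree : ∀ σ : Finset C, A ∉ σ → v' σ = v σ - d σ)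
    (hwith : ∀ σ : Finset C, A ∈ σ →
      v' σ = v σ + d (σ.erase A) + (if σ = {A} then a else 0))
    (M : ℕ) (hM1 : 1 ≤ M) (hM2 : M ≤ Fintype.card C)
    (h : ∃ S : Finset C, PhragmenOutcome v M S ∧ A ∈ S) :
    ∃ S' : Finset C, PhragmenOutcome v' M S' ∧ A ∈ S' :=
  stmt_7_general v v' A d a hd hfree hwith M h
end

section
/- Define the limit method on a profile v: elect M candidates sequentially, where in round k (k = 1,…,M) each ballot σ is counted as (k − ℓ_σ) votes for each of its not yet elected candidates, ℓ_σ being the largest round index < k in which a candidate from σ was elected (ℓ_σ = 0 if none), and the candidate with the largest vote total is elected. Suppose the limit method on v has a unique winner in every round. Then there exists N₀ such that for every N ≥ N₀, Phragmén's unordered method applied to the profile v augmented by N full ballots elects, in each round, exactly the same candidate as the limit method applied to v; in particular its unique possible outcome equals the outcome of the limit method on v. -/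
open Finset

/-- `lastRound σ l` is the largest round index in which a candidate from the
ballot `σ` was elected, where `l` lists the elected candidates with the most
recently elected first (so the head was elected in round `l.length`);
it is `0` if no candidate from `σ` has been elected. -/
def lastRound {C : Type} [DecidableEq C] (σ : Finset C) : List C → ℕ
  | [] => 0
  | i :: l => if i ∈ σ then l.length + 1 else lastRound σ l

/-- The vote total of candidate `i` in round `l.length + 1` of the limit method:
each ballot `σ ∋ i` counts `(k − ℓ_σ)` votes, where `k = l.length + 1` is the
current round and `ℓ_σ = lastRound σ l`. -/
def limScore {C : Type} [Fintype C] [DecidableEq C]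
    (v : Finset C → ℕ) (l : List C) (i : C) : ℚ :=
  ∑ σ ∈ Finset.univ.filter (fun σ : Finset C => i ∈ σ),
    (v σ : ℚ) * ((l.length : ℚ) + 1 - (lastRound σ l : ℚ))

/-- `l` (most recently elected first) is a valid sequence of elections for the
limit method: in each round an unelected candidate with the largest vote total
is elected. -/
def limValid {C : Type} [Fintype C] [DecidableEq C] (v : Finset C → ℕ) :
    List C → Prop
  | [] => True
  | i :: l => limValid v l ∧ i ∉ l ∧ ∀ j : C, j ∉ l → limScore v l j ≤ limScore v l i

/-- `S` is a possible outcome of the limit method for `M` seats. -/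
def LimOutcome {C : Type} [Fintype C] [DecidableEq C]
    (v : Finset C → ℕ) (M : ℕ) (S : Finset C) : Prop :=
  ∃ l : List C, limValid v l ∧ l.length = M ∧ l.toFinset = S

/-- The limit method on `v` has a unique winner in every round. -/
def LimUnique {C : Type} [Fintype C] [DecidableEq C]
    (v : Finset C → ℕ) (M : ℕ) : Prop :=
  ∀ l : List C, limValid v l → l.length < M →
    ∃! i : C, i ∉ l ∧ ∀ j : C, j ∉ l → limScore v l j ≤ limScore v l i


section Aux

open Filter Topology

variable {C : Type} [Fintype C] [DecidableEq C]

/-- The winner chosen by the limit method after history `l` (default `d`). -/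
noncomputable def limW (v : Finset C → ℕ) (d : C) (l : List C) : C :=
  if h : ∃ i, i ∉ l ∧ ∀ j : C, j ∉ l → limScore v l j ≤ limScore v l i then h.choose else d

/-- The canonical limit-method sequence (most recent first). -/
noncomputable def limSeq (v : Finset C → ℕ) (d : C) : ℕ → List C
  | 0 => []
  | n + 1 => limW v d (limSeq v d n) :: limSeq v d n

/-- Second-order coefficients of the Phragmén loads. -/
noncomputable def cseq (v : Finset C → ℕ) (d : C) : ℕ → ℝ
  | 0 => 0
  | n + 1 => cseq v d n - ((limScore v (limSeq v d n) (limW v d (limSeq v d n)) : ℚ) : ℝ)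

lemma limSeq_length (v : Finset C → ℕ) (d : C) (n : ℕ) : (limSeq v d n).length = n := by
  induction n with
  | zero => rfl
  | succ n ih => simp [limSeq, ih]

lemma lastRound_univ (l : List C) : lastRound (Finset.univ : Finset C) l = l.length := by
  induction l with
  | nil => rfl
  | cons i l ih => simp [lastRound]

lemma sum_vN (v : Finset C → ℕ) (N : ℕ) (j : C) (f : Finset C → ℚ) :
    ∑ σ ∈ Finset.univ.filter (fun σ : Finset C => j ∈ σ),
        (((if σ = Finset.univ then v σ + N else v σ) : ℕ) : ℚ) * f σ
      = (∑ σ ∈ Finset.univ.filter (fun σ : Finset C => j ∈ σ), (v σ : ℚ) * f σ)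
        + N * f Finset.univ := by
  have h1 : ∀ σ ∈ Finset.univ.filter (fun σ : Finset C => j ∈ σ),
      (((if σ = Finset.univ then v σ + N else v σ) : ℕ) : ℚ) * f σ
        = (v σ : ℚ) * f σ + (if σ = Finset.univ then (N : ℚ) * f σ else 0) := by
    intro σ _
    split <;> push_cast <;> ring
  rw [Finset.sum_congr rfl h1, Finset.sum_add_distrib]
  congr 1
  rw [Finset.sum_ite_eq' (Finset.univ.filter (fun σ : Finset C => j ∈ σ)) Finset.univ
    (fun σ => (N : ℚ) * f σ)]
  simp

lemma phVotes_vN (v : Finset C → ℕ) (N : ℕ) (j : C) :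
    phVotes (fun σ => if σ = Finset.univ then v σ + N else v σ) j = phVotes v j + N := by
  unfold phVotes
  have h1 : ∀ σ ∈ Finset.univ.filter (fun σ : Finset C => j ∈ σ),
      (((if σ = Finset.univ then v σ + N else v σ) : ℕ) : ℚ)
        = (v σ : ℚ) + (if σ = Finset.univ then (N : ℚ) else 0) := by
    intro σ _
    split <;> push_cast <;> ring
  rw [Finset.sum_congr rfl h1, Finset.sum_add_distrib]
  congr 1
  rw [Finset.sum_ite_eq' (Finset.univ.filter (fun σ : Finset C => j ∈ σ)) Finset.univ
    (fun _ => (N : ℚ))]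
  simp

lemma limScore_eq (v : Finset C → ℕ) (l : List C) (j : C) :
    limScore v l j = ((l.length : ℚ) + 1) * phVotes v j
      - ∑ σ ∈ Finset.univ.filter (fun σ : Finset C => j ∈ σ), (v σ : ℚ) * (lastRound σ l : ℚ) := by
  unfold limScore phVotes
  rw [Finset.mul_sum, ← Finset.sum_sub_distrib]
  exact Finset.sum_congr rfl fun σ _ => by ring

lemma phVotes_nonneg (v : Finset C → ℕ) (j : C) : (0 : ℚ) ≤ phVotes v j :=
  Finset.sum_nonneg fun σ _ => by positivity


lemma limW_spec {v : Finset C → ℕ} {M : ℕ} (hu : LimUnique v M) (d : C) {n : ℕ}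
    (hn : n < M) (hval : limValid v (limSeq v d n)) :
    limW v d (limSeq v d n) ∉ limSeq v d n ∧
      ∀ j : C, j ∉ limSeq v d n →
        limScore v (limSeq v d n) j ≤ limScore v (limSeq v d n) (limW v d (limSeq v d n)) := by
  obtain ⟨i, hi, -⟩ := hu _ hval (by rw [limSeq_length]; exact hn)
  have hex : ∃ i, i ∉ limSeq v d n ∧ ∀ j : C, j ∉ limSeq v d n →
      limScore v (limSeq v d n) j ≤ limScore v (limSeq v d n) i := ⟨i, hi⟩
  rw [limW, dif_pos hex]
  exact hex.choose_spec

lemma limSeq_valid {v : Finset C → ℕ} {M : ℕ} (hu : LimUnique v M) (d : C) :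
    ∀ n, n ≤ M → limValid v (limSeq v d n) := by
  intro n
  induction n with
  | zero => intro _; trivial
  | succ n ih =>
    intro hn
    have hval := ih (Nat.le_of_succ_le hn)
    have hw := limW_spec hu d (Nat.lt_of_succ_le hn) hval
    exact ⟨hval, hw.1, hw.2⟩

lemma limW_strict {v : Finset C → ℕ} {M : ℕ} (hu : LimUnique v M) (d : C) {n : ℕ}
    (hn : n < M) {j : C} (hj : j ∉ limSeq v d n) (hne : j ≠ limW v d (limSeq v d n)) :
    limScore v (limSeq v d n) j < limScore v (limSeq v d n) (limW v d (limSeq v d n)) := by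
  have hval := limSeq_valid hu d n hn.le
  have hw := limW_spec hu d hn hval
  obtain ⟨i, hi, huniq⟩ := hu _ hval (by rw [limSeq_length]; exact hn)
  by_contra hcon
  push_neg at hcon
  have hje : j = i := huniq j ⟨hj, fun j' hj' => (hw.2 j' hj').trans hcon⟩
  have hwe : limW v d (limSeq v d n) = i := huniq _ hw
  exact hne (hje.trans hwe.symm)

lemma limValid_eq_limSeq {v : Finset C → ℕ} {M : ℕ} (hu : LimUnique v M) (d : C) :
    ∀ l : List C, limValid v l → l.length ≤ M → l = limSeq v d l.length := by
  intro l
  induction l with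
  | nil => intro _ _; rfl
  | cons i l ih =>
    intro hval hlen
    obtain ⟨hval', hi, hmax⟩ := hval
    have hlen' : l.length < M := Nat.lt_of_succ_le hlen
    have hl := ih hval' hlen'.le
    have hvall : limValid v (limSeq v d l.length) := by rw [← hl]; exact hval'
    have hw := limW_spec hu d hlen' hvall
    obtain ⟨u, hu1, huniq⟩ := hu _ hvall (by rw [limSeq_length]; exact hlen')
    have hie : i = u := by
      apply huniq
      rw [← hl]
      exact ⟨hi, hmax⟩
    have hwe : limW v d (limSeq v d l.length) = u := huniq _ hw
    have : i :: l = limW v d (limSeq v d l.length) :: limSeq v d l.length := by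
      rw [hie, hwe, ← hl]
    simpa [limSeq] using this


lemma phT_tendsto (v : Finset C → ℕ) (d : C) (m : ℕ) (j : C)
    (hload : ∀ σ : Finset C, Filter.Tendsto (fun N : ℕ => (N : ℝ) * ((N : ℝ) *
        ((phLoads (fun τ => if τ = Finset.univ then v τ + N else v τ) (limSeq v d m) σ : ℚ) : ℝ)
        - (lastRound σ (limSeq v d m) : ℝ))) Filter.atTop
        (nhds (cseq v d (lastRound σ (limSeq v d m))))) :
    Filter.Tendsto (fun N : ℕ => (N : ℝ) * ((N : ℝ) *
        ((phT (fun τ => if τ = Finset.univ then v τ + N else v τ)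
            (phLoads (fun τ => if τ = Finset.univ then v τ + N else v τ) (limSeq v d m)) j : ℚ) : ℝ)
        - ((m : ℝ) + 1))) Filter.atTop
      (nhds (cseq v d m - ((limScore v (limSeq v d m) j : ℚ) : ℝ))) := by
  classical
  have hlen : (limSeq v d m).length = m := limSeq_length v d m
  have hs0 : (0:ℝ) ≤ ((phVotes v j : ℚ) : ℝ) := by exact_mod_cast phVotes_nonneg v j
  have hgu : Filter.Tendsto (fun N : ℕ => (N : ℝ) * ((N : ℝ) *
      ((phLoads (fun τ => if τ = Finset.univ then v τ + N else v τ) (limSeq v d m)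
        Finset.univ : ℚ) : ℝ) - (m : ℝ))) Filter.atTop (nhds (cseq v d m)) := by
    have h := hload Finset.univ
    rw [lastRound_univ, hlen] at h
    exact h
  have hSA : Filter.Tendsto (fun N : ℕ => ∑ σ ∈ Finset.univ.filter (fun σ : Finset C => j ∈ σ),
      (v σ : ℝ) * ((N : ℝ) * ((N : ℝ) *
        ((phLoads (fun τ => if τ = Finset.univ then v τ + N else v τ) (limSeq v d m) σ : ℚ) : ℝ)
        - (lastRound σ (limSeq v d m) : ℝ)))) Filter.atTop
      (nhds (∑ σ ∈ Finset.univ.filter (fun σ : Finset C => j ∈ σ),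
        (v σ : ℝ) * cseq v d (lastRound σ (limSeq v d m)))) :=
    tendsto_finset_sum _ fun σ _ => (hload σ).const_mul _
  have hfrac : Filter.Tendsto (fun N : ℕ => (N : ℝ) / ((N : ℝ) + ((phVotes v j : ℚ) : ℝ)))
      Filter.atTop (nhds 1) := tendsto_natCast_div_add_atTop _
  have hinv : Filter.Tendsto (fun N : ℕ => ((N : ℝ))⁻¹) Filter.atTop (nhds 0) :=
    tendsto_inv_atTop_nhds_zero_nat
  have hR : Filter.Tendsto (fun N : ℕ =>
      (-((limScore v (limSeq v d m) j : ℚ) : ℝ)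
        + (N : ℝ) * ((N : ℝ) *
          ((phLoads (fun τ => if τ = Finset.univ then v τ + N else v τ) (limSeq v d m)
            Finset.univ : ℚ) : ℝ) - (m : ℝ))
        + ((N : ℝ))⁻¹ * ∑ σ ∈ Finset.univ.filter (fun σ : Finset C => j ∈ σ),
          (v σ : ℝ) * ((N : ℝ) * ((N : ℝ) *
            ((phLoads (fun τ => if τ = Finset.univ then v τ + N else v τ) (limSeq v d m) σ : ℚ) : ℝ)
            - (lastRound σ (limSeq v d m) : ℝ))))
        * ((N : ℝ) / ((N : ℝ) + ((phVotes v j : ℚ) : ℝ)))) Filter.atTop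
      (nhds ((-((limScore v (limSeq v d m) j : ℚ) : ℝ) + cseq v d m
        + 0 * ∑ σ ∈ Finset.univ.filter (fun σ : Finset C => j ∈ σ),
          (v σ : ℝ) * cseq v d (lastRound σ (limSeq v d m))) * 1)) :=
    ((tendsto_const_nhds.add hgu).add (hinv.mul hSA)).mul hfrac
  rw [show cseq v d m - ((limScore v (limSeq v d m) j : ℚ) : ℝ)
      = (-((limScore v (limSeq v d m) j : ℚ) : ℝ) + cseq v d m
        + 0 * ∑ σ ∈ Finset.univ.filter (fun σ : Finset C => j ∈ σ),
          (v σ : ℝ) * cseq v d (lastRound σ (limSeq v d m))) * 1 from by ring]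
  refine hR.congr' ?_
  filter_upwards [Filter.eventually_ge_atTop 1] with N hN
  have hNpos : (0:ℝ) < (N : ℝ) := by exact_mod_cast Nat.lt_of_lt_of_le Nat.zero_lt_one hN
  have hN0 : (N : ℝ) ≠ 0 := ne_of_gt hNpos
  have hden : (N : ℝ) + ((phVotes v j : ℚ) : ℝ) ≠ 0 := by positivity
  have hsum2 : ∑ σ ∈ Finset.univ.filter (fun σ : Finset C => j ∈ σ),
      (v σ : ℝ) * ((N : ℝ) * ((N : ℝ) *
        ((phLoads (fun τ => if τ = Finset.univ then v τ + N else v τ) (limSeq v d m) σ : ℚ) : ℝ)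
        - (lastRound σ (limSeq v d m) : ℝ)))
      = (N : ℝ) * ((N : ℝ) * (∑ σ ∈ Finset.univ.filter (fun σ : Finset C => j ∈ σ),
          (v σ : ℝ) * ((phLoads (fun τ => if τ = Finset.univ then v τ + N else v τ)
            (limSeq v d m) σ : ℚ) : ℝ))
        - ∑ σ ∈ Finset.univ.filter (fun σ : Finset C => j ∈ σ),
          (v σ : ℝ) * (lastRound σ (limSeq v d m) : ℝ)) := by
    rw [Finset.mul_sum, ← Finset.sum_sub_distrib, Finset.mul_sum]
    exact Finset.sum_congr rfl fun σ _ => by ring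
  rw [hsum2, phT, phVotes_vN, sum_vN, limScore_eq, hlen]
  push_cast
  field_simp
  ring


lemma loads_tendsto {v : Finset C → ℕ} {M : ℕ} (hu : LimUnique v M) (d : C) :
    ∀ m, m ≤ M → ∀ σ : Finset C, Filter.Tendsto (fun N : ℕ => (N : ℝ) * ((N : ℝ) *
        ((phLoads (fun τ => if τ = Finset.univ then v τ + N else v τ) (limSeq v d m) σ : ℚ) : ℝ)
        - (lastRound σ (limSeq v d m) : ℝ))) Filter.atTop
        (nhds (cseq v d (lastRound σ (limSeq v d m)))) := by
  intro m
  induction m with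
  | zero =>
    intro _ σ
    simp only [limSeq, phLoads, lastRound, cseq]
    simpa using tendsto_const_nhds
  | succ n ih =>
    intro hm σ
    have hlt : n < M := Nat.lt_of_succ_le hm
    have hload := ih hlt.le
    have hseq : limSeq v d (n + 1) = limW v d (limSeq v d n) :: limSeq v d n := rfl
    by_cases hw : limW v d (limSeq v d n) ∈ σ
    · have h1 : ∀ N : ℕ, phLoads (fun τ => if τ = Finset.univ then v τ + N else v τ)
          (limSeq v d (n + 1)) σ
          = phT (fun τ => if τ = Finset.univ then v τ + N else v τ)
              (phLoads (fun τ => if τ = Finset.univ then v τ + N else v τ) (limSeq v d n))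
              (limW v d (limSeq v d n)) := fun N => by
        rw [hseq]; simp [phLoads, hw]
      have h2 : lastRound σ (limSeq v d (n + 1)) = n + 1 := by
        rw [hseq]; simp [lastRound, hw, limSeq_length]
      have h := phT_tendsto v d n (limW v d (limSeq v d n)) hload
      simp only [h1, h2]
      have h3 : cseq v d (n + 1)
          = cseq v d n - ((limScore v (limSeq v d n) (limW v d (limSeq v d n)) : ℚ) : ℝ) := rfl
      rw [h3]
      have h4 : ((n + 1 : ℕ) : ℝ) = (n : ℝ) + 1 := by push_cast; ring
      simp only [h4]
      exact h
    · have h1 : ∀ N : ℕ, phLoads (fun τ => if τ = Finset.univ then v τ + N else v τ)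
          (limSeq v d (n + 1)) σ
          = phLoads (fun τ => if τ = Finset.univ then v τ + N else v τ) (limSeq v d n) σ :=
        fun N => by rw [hseq]; simp [phLoads, hw]
      have h2 : lastRound σ (limSeq v d (n + 1)) = lastRound σ (limSeq v d n) := by
        rw [hseq]; simp [lastRound, hw]
      simp only [h1, h2]
      exact hload σ


lemma eventually_strict {v : Finset C → ℕ} {M : ℕ} (hu : LimUnique v M) (d : C) :
    ∀ᶠ N : ℕ in Filter.atTop, 1 ≤ N ∧ ∀ m, m < M → ∀ j : C, j ∉ limSeq v d m →
      j ≠ limW v d (limSeq v d m) →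
      phT (fun τ => if τ = Finset.univ then v τ + N else v τ)
          (phLoads (fun τ => if τ = Finset.univ then v τ + N else v τ) (limSeq v d m))
          (limW v d (limSeq v d m))
        < phT (fun τ => if τ = Finset.univ then v τ + N else v τ)
            (phLoads (fun τ => if τ = Finset.univ then v τ + N else v τ) (limSeq v d m)) j := by
  have key : ∀ m, m < M → ∀ j : C, ∀ᶠ N : ℕ in Filter.atTop,
      j ∉ limSeq v d m → j ≠ limW v d (limSeq v d m) →
      phT (fun τ => if τ = Finset.univ then v τ + N else v τ)
          (phLoads (fun τ => if τ = Finset.univ then v τ + N else v τ) (limSeq v d m))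
          (limW v d (limSeq v d m))
        < phT (fun τ => if τ = Finset.univ then v τ + N else v τ)
            (phLoads (fun τ => if τ = Finset.univ then v τ + N else v τ) (limSeq v d m)) j := by
    intro m hm j
    by_cases hj : j ∉ limSeq v d m ∧ j ≠ limW v d (limSeq v d m)
    · have hload := loads_tendsto hu d m hm.le
      have h1 := phT_tendsto v d m (limW v d (limSeq v d m)) hload
      have h2 := phT_tendsto v d m j hload
      have hlt : (cseq v d m - ((limScore v (limSeq v d m) (limW v d (limSeq v d m)) : ℚ) : ℝ))
          - (cseq v d m - ((limScore v (limSeq v d m) j : ℚ) : ℝ)) < 0 := by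
        have := limW_strict hu d hm hj.1 hj.2
        have hcast : ((limScore v (limSeq v d m) j : ℚ) : ℝ)
            < ((limScore v (limSeq v d m) (limW v d (limSeq v d m)) : ℚ) : ℝ) := by
          exact_mod_cast this
        linarith
      have hev := (h1.sub h2).eventually_lt_const hlt |>.and (Filter.eventually_ge_atTop 1)
      refine hev.mono ?_
      rintro N ⟨hdiff, hN⟩ _ _
      have hNpos : (0:ℝ) < (N : ℝ) := by exact_mod_cast Nat.lt_of_lt_of_le Nat.zero_lt_one hN
      set tw : ℚ := phT (fun τ => if τ = Finset.univ then v τ + N else v τ)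
          (phLoads (fun τ => if τ = Finset.univ then v τ + N else v τ) (limSeq v d m))
          (limW v d (limSeq v d m)) with htw
      set tj : ℚ := phT (fun τ => if τ = Finset.univ then v τ + N else v τ)
          (phLoads (fun τ => if τ = Finset.univ then v τ + N else v τ) (limSeq v d m)) j with htj
      have : (tw : ℝ) < (tj : ℝ) := by
        by_contra hcon
        push_neg at hcon
        nlinarith [mul_pos hNpos hNpos]
      exact_mod_cast this
    · refine Filter.Eventually.of_forall ?_
      intro N h1 h2
      exact absurd ⟨h1, h2⟩ hj
  have base : ∀ m ∈ Finset.range M, ∀ᶠ N : ℕ in Filter.atTop, ∀ j : C,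
      j ∉ limSeq v d m → j ≠ limW v d (limSeq v d m) →
      phT (fun τ => if τ = Finset.univ then v τ + N else v τ)
          (phLoads (fun τ => if τ = Finset.univ then v τ + N else v τ) (limSeq v d m))
          (limW v d (limSeq v d m))
        < phT (fun τ => if τ = Finset.univ then v τ + N else v τ)
            (phLoads (fun τ => if τ = Finset.univ then v τ + N else v τ) (limSeq v d m)) j :=
    fun m hm => Filter.eventually_all.2 fun j => key m (Finset.mem_range.1 hm) j
  have hall := (Filter.eventually_all_finset (Finset.range M)).2 base
  refine ((Filter.eventually_ge_atTop 1).and hall).mono ?_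
  rintro N ⟨h1, h2⟩
  exact ⟨h1, fun m hm j => h2 m (Finset.mem_range.2 hm) j⟩

end Aux





/-- If the limit method on `v` has a unique winner in every round, then for all
sufficiently large `N`, Phragmén's unordered method on `v` augmented by `N` full
ballots elects in each round exactly the same candidate as the limit method on
`v`; in particular its unique possible outcome equals that of the limit method. -/
theorem stmt_12 {C : Type} [Fintype C] [DecidableEq C]
    (v : Finset C → ℕ) (hv0 : v ∅ = 0)
    (M : ℕ) (hM1 : 1 ≤ M) (hM2 : M ≤ Fintype.card C)
    (hu : LimUnique v M) :
    ∃ N₀ : ℕ, ∀ N : ℕ, N₀ ≤ N →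
      (∀ l : List C, l.length ≤ M →
        (phValid (fun σ => if σ = Finset.univ then v σ + N else v σ) l ↔
          limValid v l)) ∧
      (∀ S : Finset C,
        PhragmenOutcome (fun σ => if σ = Finset.univ then v σ + N else v σ) M S ↔
          LimOutcome v M S) := by
  classical
  have hC : Nonempty C := by
    rw [← Fintype.card_pos_iff]
    omega
  obtain ⟨d⟩ := hC
  obtain ⟨N₀, hN₀⟩ := Filter.eventually_atTop.1 (eventually_strict hu d)
  refine ⟨N₀, fun N hN => ?_⟩
  obtain ⟨hN1, hstrict⟩ := hN₀ N hN
  have hphseq : ∀ m, m ≤ M →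
      phValid (fun σ => if σ = Finset.univ then v σ + N else v σ) (limSeq v d m) := by
    intro m
    induction m with
    | zero => intro _; trivial
    | succ n ih =>
      intro hm
      have hn : n < M := Nat.lt_of_succ_le hm
      have hval := limSeq_valid hu d n hn.le
      have hw := limW_spec hu d hn hval
      refine ⟨ih hn.le, hw.1, ?_, ?_⟩
      · rw [phVotes_vN]
        have h1 := phVotes_nonneg v (limW v d (limSeq v d n))
        have h2 : (0:ℚ) < N := by exact_mod_cast hN1
        linarith
      · intro j hj hpos
        rcases eq_or_ne j (limW v d (limSeq v d n)) with rfl | hne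
        · exact le_refl _
        · exact (hstrict n hn j hj hne).le
  have hphuniq : ∀ l : List C,
      phValid (fun σ => if σ = Finset.univ then v σ + N else v σ) l →
      l.length ≤ M → l = limSeq v d l.length := by
    intro l
    induction l with
    | nil => intro _ _; rfl
    | cons i l ih =>
      intro hval hlen
      obtain ⟨hval', hi, hpos, hmin⟩ := hval
      have hlen' : l.length < M := Nat.lt_of_succ_le hlen
      obtain ⟨n, hn, hl⟩ : ∃ n, n = l.length ∧ l = limSeq v d n :=
        ⟨l.length, rfl, ih hval' hlen'.le⟩
      subst hl
      clear hn
      rw [limSeq_length] at hlen'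
      rw [List.length_cons, limSeq_length] at hlen ⊢
      have hvall : limValid v (limSeq v d n) := limSeq_valid hu d _ hlen'.le
      have hw := limW_spec hu d hlen' hvall
      rcases eq_or_ne i (limW v d (limSeq v d n)) with he | hne
      · rw [he]
        rfl
      · exfalso
        have hwpos : 0 < phVotes (fun σ => if σ = Finset.univ then v σ + N else v σ)
            (limW v d (limSeq v d n)) := by
          rw [phVotes_vN]
          have h1 := phVotes_nonneg v (limW v d (limSeq v d n))
          have h2 : (0:ℚ) < N := by exact_mod_cast hN1
          linarith
        have h1 := hmin (limW v d (limSeq v d n)) hw.1 hwpos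
        have h2 := hstrict n hlen' i hi hne
        exact absurd h1 (not_le.2 h2)
  constructor
  · intro l hlen
    constructor
    · intro hph
      have he := hphuniq l hph hlen
      rw [he]
      exact limSeq_valid hu d _ hlen
    · intro hlim
      have he := limValid_eq_limSeq hu d l hlim hlen
      rw [he]
      exact hphseq _ hlen
  · intro S
    constructor
    · rintro ⟨l, hph, hlen, hS⟩
      refine ⟨l, ?_, hlen, hS⟩
      have he := hphuniq l hph hlen.le
      rw [he]
      exact limSeq_valid hu d _ hlen.le
    · rintro ⟨l, hlim, hlen, hS⟩
      refine ⟨l, ?_, hlen, hS⟩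
      have he := limValid_eq_limSeq hu d l hlim hlen.le
      rw [he]
      exact hphseq _ hlen.le
end

section
/- Phragmén's unordered method satisfies the following proportionality criterion: let 1 ≤ ℓ ≤ M and let σ ⊆ C with |σ| ≥ ℓ. If the number of ballots equal to σ satisfies v_σ > (ℓ/(M+1))·V, then every possible outcome E of Phragmén's unordered method for M seats contains at least ℓ candidates from σ, i.e. |E ∩ σ| ≥ ℓ. -/
open Finset

/-!
Write `r` for the loads after the elections so far and `t_j = phT v r j`. Electing `i` raises
the loads of the ballots containing `i` to `t_i`, which adds exactly
`Σ_{τ ∋ i} v_τ (t_i - r_τ) = 1` to the total load, so after `M` seats the total load is `M`.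
By minimality of each `t_i`, all loads stay below `t_j` for every unelected `j`; every term of
`Σ_{τ ∋ j} v_τ (t_j - r_τ) = 1` is then nonnegative, so `v_σ (t_j - r_σ) ≤ 1` for `j ∈ σ`, and
`V t_j ≥ M + 1`. The first bound shows inductively that the load of `σ` is at most `k / v_σ` while
only `k < |σ|` members of `σ` are elected. If fewer than `ℓ` were elected at the end, some
`j ∈ σ` is unelected and `M + 1 ≤ V t_j ≤ V ℓ / v_σ`, contradicting `v_σ > ℓ V / (M + 1)`.
-/

lemma Finset.exists_mem_notMem_of_card_inter_lt {α : Type*} [DecidableEq α]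
    {s σ : Finset α} (h : (s ∩ σ).card < σ.card) : ∃ j ∈ σ, j ∉ s := by
  by_contra! hσs
  rw [inter_eq_right.mpr hσs] at h
  exact lt_irrefl _ h

namespace Phragmen

variable {C : Type} [Fintype C] [DecidableEq C] {v : Finset C → ℕ}

lemma phVotes_nonneg (i : C) : 0 ≤ phVotes v i :=
  sum_nonneg fun _ _ => Nat.cast_nonneg _

lemma phVotes_pos_of_mem {σ : Finset C} (hσ : 0 < v σ) {j : C} (hj : j ∈ σ) :
    0 < phVotes v j :=
  lt_of_lt_of_le (Nat.cast_pos.mpr hσ) <|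
    single_le_sum (f := fun τ => (v τ : ℚ)) (fun _ _ => Nat.cast_nonneg _) (by simpa using hj)

lemma phT_monotone (i : C) : Monotone (fun r => phT v r i) := fun _ _ h =>
  div_le_div_of_nonneg_right
    (add_le_add_right (sum_le_sum fun τ _ => mul_le_mul_of_nonneg_left (h τ) (Nat.cast_nonneg _)) 1)
    (phVotes_nonneg i)

lemma sum_mul_phT_sub_eq_one (r : Finset C → ℚ) {i : C} (hi : phVotes v i ≠ 0) :
    ∑ τ ∈ univ.filter (i ∈ ·), (v τ : ℚ) * (phT v r i - r τ) = 1 := by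
  simp only [mul_sub, sum_sub_distrib, ← sum_mul]
  rw [← phVotes, phT, mul_div_cancel₀ _ hi]
  ring

section LoadsBelowT

variable {r : Finset C → ℚ} {i : C} (hr : ∀ τ, r τ ≤ phT v r i) (hi : 0 < phVotes v i)
include hr hi

lemma mul_phT_sub_le_one {σ : Finset C} (hiσ : i ∈ σ) : (v σ : ℚ) * (phT v r i - r σ) ≤ 1 := by
  rw [← sum_mul_phT_sub_eq_one r hi.ne']
  exact single_le_sum (f := fun τ => (v τ : ℚ) * (phT v r i - r τ))
    (fun τ _ => mul_nonneg (Nat.cast_nonneg _) (sub_nonneg.mpr (hr τ))) (by simpa using hiσ)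

lemma one_add_sum_le_sum_mul_phT :
    1 + ∑ τ, (v τ : ℚ) * r τ ≤ (∑ τ, (v τ : ℚ)) * phT v r i := by
  have h : 1 ≤ ∑ τ, (v τ : ℚ) * (phT v r i - r τ) := by
    rw [← sum_mul_phT_sub_eq_one r hi.ne']
    exact sum_le_sum_of_subset_of_nonneg (subset_univ _)
      fun τ _ _ => mul_nonneg (Nat.cast_nonneg _) (sub_nonneg.mpr (hr τ))
  simp only [mul_sub, sum_sub_distrib, ← sum_mul] at h
  linarith

end LoadsBelowT

lemma sum_mul_phLoads_cons (l : List C) {i : C} (hi : phVotes v i ≠ 0) :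
    ∑ τ, (v τ : ℚ) * phLoads v (i :: l) τ = ∑ τ, (v τ : ℚ) * phLoads v l τ + 1 := by
  rw [← sum_mul_phT_sub_eq_one (phLoads v l) hi, sum_filter, ← sub_eq_iff_eq_add',
    ← sum_sub_distrib]
  refine sum_congr rfl fun τ _ => ?_
  by_cases h : i ∈ τ <;> simp [phLoads, h, mul_sub]

lemma sum_mul_phLoads {l : List C} (hl : phValid v l) :
    ∑ τ, (v τ : ℚ) * phLoads v l τ = l.length := by
  induction l with
  | nil => simp [phLoads]
  | cons i l ih =>
    obtain ⟨hl, -, hi, -⟩ := hl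
    rw [sum_mul_phLoads_cons l hi.ne', ih hl, List.length_cons, Nat.cast_succ]

lemma phLoads_le_phT {l : List C} (hl : phValid v l) {j : C} (hjl : j ∉ l)
    (hj : 0 < phVotes v j) (τ : Finset C) : phLoads v l τ ≤ phT v (phLoads v l) j := by
  induction l generalizing j τ with
  | nil => exact div_nonneg (by simp [phLoads]) (phVotes_nonneg j)
  | cons i l ih =>
    obtain ⟨hl, hil, hi, hmin⟩ := hl
    rw [List.mem_cons, not_or] at hjl
    have hmono : phLoads v l ≤ phLoads v (i :: l) := fun τ' => by
      by_cases h : i ∈ τ'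
      · simpa [phLoads, h] using ih hl hil hi τ'
      · simp [phLoads, h]
    refine le_trans ?_ (phT_monotone j hmono)
    by_cases h : i ∈ τ
    · simpa [phLoads, h] using hmin j hjl.2 hj
    · simpa [phLoads, h] using ih hl hjl.2 hj τ

lemma mul_phLoads_le_card_inter {σ : Finset C} (hσ : 0 < v σ) {l : List C} (hl : phValid v l)
    (hcard : (l.toFinset ∩ σ).card < σ.card) :
    (v σ : ℚ) * phLoads v l σ ≤ (l.toFinset ∩ σ).card := by
  induction l with
  | nil => simp [phLoads]
  | cons i l ih =>
    obtain ⟨hl, hil, hi, hmin⟩ := hl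
    by_cases hiσ : i ∈ σ
    · have hcons : ((i :: l).toFinset ∩ σ).card = (l.toFinset ∩ σ).card + 1 := by
        rw [List.toFinset_cons, insert_inter_of_mem hiσ,
          card_insert_of_notMem (by simp [hil])]
      have hlt : (l.toFinset ∩ σ).card < σ.card := by omega
      obtain ⟨j, hjσ, hjl⟩ := exists_mem_notMem_of_card_inter_lt hlt
      have hjv := phVotes_pos_of_mem hσ hjσ
      have hj := mul_phT_sub_le_one (phLoads_le_phT hl (by simpa using hjl) hjv) hjv hjσ
      have hij := hmin j (by simpa using hjl) hjv
      simp only [phLoads, if_pos hiσ, hcons, Nat.cast_succ]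
      nlinarith [ih hl hlt]
    · have hcons : (i :: l).toFinset ∩ σ = l.toFinset ∩ σ := by
        rw [List.toFinset_cons, insert_inter_of_notMem hiσ]
      rw [hcons] at hcard ⊢
      simpa [phLoads, hiσ] using ih hl hcard

end Phragmen

open Phragmen in
theorem stmt_13_general {C : Type} [Fintype C] [DecidableEq C]
    (v : Finset C → ℕ)
    (M : ℕ)
    (ℓ : ℕ)
    (σ : Finset C) (hσ : ℓ ≤ σ.card)
    (hbig : (ℓ : ℚ) * (∑ τ : Finset C, (v τ : ℚ)) < ((M : ℚ) + 1) * (v σ : ℚ)) :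
    ∀ E : Finset C, PhragmenOutcome v M E → ℓ ≤ (E ∩ σ).card := by
  rintro E ⟨l, hl, rfl, rfl⟩
  by_contra! hlt
  have hvσ : 0 < v σ := Nat.pos_of_ne_zero fun h => by
    simp only [h, CharP.cast_eq_zero, mul_zero] at hbig
    exact hbig.not_ge (by positivity)
  obtain ⟨j, hjσ, hjl⟩ := exists_mem_notMem_of_card_inter_lt (hlt.trans_le hσ)
  have hjv := phVotes_pos_of_mem hvσ hjσ
  have hr := phLoads_le_phT hl (by simpa using hjl) hjv
  set t := phT v (phLoads v l) j
  have hV : (l.length : ℚ) + 1 ≤ (∑ τ, (v τ : ℚ)) * t := by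
    simpa [sum_mul_phLoads hl, add_comm] using one_add_sum_le_sum_mul_phT hr hjv
  have hσt : (v σ : ℚ) * t ≤ ℓ := by
    have hload := mul_phLoads_le_card_inter hvσ hl (hlt.trans_le hσ)
    have hcard : ((l.toFinset ∩ σ).card : ℚ) + 1 ≤ ℓ := by exact_mod_cast hlt
    nlinarith [mul_phT_sub_le_one hr hjv hjσ]
  have hV0 : (0 : ℚ) ≤ ∑ τ, (v τ : ℚ) := by positivity
  nlinarith [mul_le_mul_of_nonneg_left hσt hV0]

/-- Proportionality of Phragmén's unordered method: if `1 ≤ ℓ ≤ M`, `σ` has at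
least `ℓ` candidates, and more than `(ℓ/(M+1))·V` voters cast exactly the ballot
`σ`, then every possible outcome `E` for `M` seats contains at least `ℓ`
candidates from `σ`. -/
theorem stmt_13 {C : Type} [Fintype C] [DecidableEq C]
    (v : Finset C → ℕ) (hv0 : v ∅ = 0)
    (M : ℕ) (hM1 : 1 ≤ M) (hM2 : M ≤ Fintype.card C)
    (ℓ : ℕ) (hl1 : 1 ≤ ℓ) (hl2 : ℓ ≤ M)
    (σ : Finset C) (hσ : ℓ ≤ σ.card)
    (hbig : (ℓ : ℚ) * (∑ τ : Finset C, (v τ : ℚ)) < ((M : ℚ) + 1) * (v σ : ℚ)) :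
    ∀ E : Finset C, PhragmenOutcome v M E → ℓ ≤ (E ∩ σ).card :=
  stmt_13_general v M ℓ σ hσ hbig
end
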